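/- arXiv:2009.12456 — 14 statements merged into one kernel-verified Lean document; each statement's English description precedes it below -/
import Mathlib

section
/- Let c and c′ be codewords of the EII code C, and for each 0 ≤ j ≤ m−1 let E_j ⊆ {0,…,n−1} be a set of (erased) positions such that c_j and c′_j agree at every position outside E_j. Suppose the index set {0,…,m−1} can be partitioned into pairwise disjoint sets S_0, S_1, …, S_t with |S_0| ≥ s_0 and |S_i| ≤ s_i for 1 ≤ i ≤ t, such that for every 0 ≤ i ≤ t and every j ∈ S_i the set E_j is correctable by C_i. Then c = c′; in other words, every erasure pattern of this shape is correctable by C. -/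
lemma key_lemma {F : Type*} [Field F] {n m : ℕ}
    (α : F) (hα : m ≤ orderOf α)
    (W : Submodule F (Fin n → F)) (d : Fin m → Fin n → F)
    (T : Finset (Fin m)) (N : ℕ)
    (hcard : T.card ≤ N) (hz : ∀ j ∉ T, d j = 0)
    (hsyn : ∀ r < N, (∑ j : Fin m, α ^ (r * (j : ℕ)) • d j) ∈ W) :
    ∀ j, d j ∈ W := by
  intro j
  by_cases hjT : j ∈ T
  swap
  · rw [hz j hjT]; exact W.zero_mem
  have hm0 : 0 < m := j.pos
  have hα0 : α ≠ 0 := by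
    intro h0
    have h1 : orderOf α = 0 := by
      rw [h0, orderOf_eq_zero_iff]
      intro hfin
      obtain ⟨k, hk, hk1⟩ := hfin.exists_pow_eq_one
      rw [zero_pow hk.ne'] at hk1
      exact zero_ne_one hk1
    omega
  have hinj : Set.InjOn (fun j : Fin m => α ^ (j : ℕ)) T := by
    have key : ∀ x y : Fin m, (x:ℕ) < (y:ℕ) → α ^ (x:ℕ) ≠ α ^ (y:ℕ) := by
      intro x y hxy h
      have hpow : α ^ (y:ℕ) = α ^ (x:ℕ) * α ^ ((y:ℕ) - (x:ℕ)) := by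
        rw [← pow_add]; congr 1; omega
      have hx0 : α ^ (x:ℕ) ≠ 0 := pow_ne_zero _ hα0
      have h1 : α ^ ((y:ℕ) - (x:ℕ)) = 1 := by
        have h' : α ^ (x:ℕ) * 1 = α ^ (x:ℕ) * α ^ ((y:ℕ) - (x:ℕ)) := by
          rw [mul_one, ← hpow, h]
        exact (mul_left_cancel₀ hx0 h').symm
      have hdvd := orderOf_dvd_of_pow_eq_one h1
      have hle := Nat.le_of_dvd (by omega) hdvd
      have hy : (y:ℕ) < m := y.isLt
      omega
    intro a _ b _ hab
    rcases lt_trichotomy (a:ℕ) (b:ℕ) with h | h | h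
    · exact absurd hab (key a b h)
    · exact Fin.ext h
    · exact absurd hab.symm (key b a h)
  set v : Fin m → F := fun j : Fin m => α ^ (j : ℕ) with hv
  set p := Lagrange.basis T v j with hp
  have hdeg : p.natDegree < N := by
    have hd := Polynomial.natDegree_eq_of_degree_eq_some
      (Lagrange.degree_basis hinj hjT)
    have hc1 : 1 ≤ T.card := Finset.card_pos.mpr ⟨j, hjT⟩
    rw [hd]
    omega
  have calc1 : (∑ r ∈ Finset.range N, p.coeff r •
      (∑ j' : Fin m, α ^ (r * (j' : ℕ)) • d j')) = d j := by
    calc (∑ r ∈ Finset.range N, p.coeff r • ∑ j' : Fin m, α ^ (r * (j' : ℕ)) • d j')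
        = ∑ r ∈ Finset.range N, ∑ j' : Fin m, (p.coeff r * α ^ (r * (j' : ℕ))) • d j' := by
          simp [Finset.smul_sum, smul_smul]
      _ = ∑ j' : Fin m, ∑ r ∈ Finset.range N, (p.coeff r * α ^ (r * (j' : ℕ))) • d j' :=
          Finset.sum_comm
      _ = ∑ j' : Fin m, (∑ r ∈ Finset.range N, p.coeff r * α ^ (r * (j' : ℕ))) • d j' := by
          simp [Finset.sum_smul]
      _ = ∑ j' : Fin m, (p.eval (v j')) • d j' := by
          refine Finset.sum_congr rfl fun j' _ => ?_
          congr 1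
          rw [Polynomial.eval_eq_sum_range' hdeg]
          refine Finset.sum_congr rfl fun r _ => ?_
          rw [mul_comm r (j' : ℕ), pow_mul]
      _ = d j := by
          rw [Finset.sum_eq_single j]
          · rw [show v j = v j from rfl, hp, Lagrange.eval_basis_self hinj hjT, one_smul]
          · intro b _ hbj
            by_cases hbT : b ∈ T
            · rw [hp, Lagrange.eval_basis_of_ne (Ne.symm hbj) hbT, zero_smul]
            · rw [hz b hbT, smul_zero]
          · intro h; exact absurd (Finset.mem_univ j) h
  rw [← calc1]
  exact Submodule.sum_mem _ fun r hr =>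
    Submodule.smul_mem _ _ (hsyn r (Finset.mem_range.mp hr))


/-- erasure-correcting capability of EII codes, Theorem 2 of the paper.

Context: `F` a finite field, `C 0 ⊃ C 1 ⊃ ⋯ ⊃ C t = ⊥` strictly nested linear codes of
length `n`, parameters `s 0, …, s t` with `m = s 0 + ⋯ + s t ≥ 1`, `α` of multiplicative
order at least `m`, and `ŝ i = s i + ⋯ + s t`.  A codeword of the EII code `C` is a tuple
`c : Fin m → Fin n → F` with every row in `C 0` and `∑ j : Fin m, α ^ (r*j) • c j ∈ C i` for all
`1 ≤ i ≤ t` and `r < ŝ i`.  A set `E` of positions is correctable by a code `D` if any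
codeword of `D` vanishing outside `E` is zero.

Claim: if `c, c'` are codewords of `C` agreeing outside erasure sets `E j`, and the row
indices are partitioned into pairwise disjoint sets `S 0, …, S t` with `|S 0| ≥ s 0`,
`|S i| ≤ s i` for `1 ≤ i ≤ t`, such that `E j` is correctable by `C i` whenever `j ∈ S i`,
then `c = c'`. -/
theorem stmt_0
    {F : Type*} [Field F] [Fintype F] [DecidableEq F]
    (n t : ℕ) (hn : 1 ≤ n) (ht : 1 ≤ t)
    (C : ℕ → Submodule F (Fin n → F))
    (hCt : C t = ⊥)
    (hnest : ∀ i, i < t → C (i + 1) < C i)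
    (s : ℕ → ℕ) (m : ℕ)
    (hm : m = ∑ i ∈ Finset.range (t + 1), s i) (hm1 : 1 ≤ m)
    (α : F) (hα : m ≤ orderOf α)
    (shat : ℕ → ℕ) (hshat : ∀ i, shat i = ∑ j ∈ Finset.Icc i t, s j)
    (c c' : Fin m → Fin n → F)
    (hc : (∀ j, c j ∈ C 0) ∧ ∀ i, 1 ≤ i → i ≤ t → ∀ r, r < shat i →
        (∑ j : Fin m, α ^ (r * (j : ℕ)) • c j) ∈ C i)
    (hc' : (∀ j, c' j ∈ C 0) ∧ ∀ i, 1 ≤ i → i ≤ t → ∀ r, r < shat i →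
        (∑ j : Fin m, α ^ (r * (j : ℕ)) • c' j) ∈ C i)
    (E : Fin m → Finset (Fin n))
    (hagree : ∀ j : Fin m, ∀ k : Fin n, k ∉ E j → c j k = c' j k)
    (S : ℕ → Finset (Fin m))
    (hdisj : ∀ i ≤ t, ∀ i' ≤ t, i ≠ i' → Disjoint (S i) (S i'))
    (hcover : ∀ j : Fin m, ∃ i ≤ t, j ∈ S i)
    (hS0 : s 0 ≤ (S 0).card)
    (hSi : ∀ i, 1 ≤ i → i ≤ t → (S i).card ≤ s i)
    (hcorr : ∀ i ≤ t, ∀ j ∈ S i, ∀ x ∈ C i, (∀ k, k ∉ E j → x k = 0) → x = 0) :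
    c = c' := by
  classical
  set d : Fin m → Fin n → F := fun j => c j - c' j with hd
  suffices hzero : ∀ i ≤ t, ∀ j ∈ S i, d j = 0 by
    funext j
    obtain ⟨i, hit, hji⟩ := hcover j
    have h0 : c j - c' j = 0 := hzero i hit j hji
    exact sub_eq_zero.mp h0
  intro i
  induction i using Nat.strong_induction_on with
  | _ i IH =>
    intro hit j hjS
    have hEj : ∀ k, k ∉ E j → d j k = 0 := fun k hk => by
      simp only [hd]
      simp [hagree j k hk]
    rcases Nat.eq_zero_or_pos i with rfl | hi1
    · exact hcorr 0 (Nat.zero_le t) j hjS _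
        (Submodule.sub_mem _ (hc.1 j) (hc'.1 j)) hEj
    · set T : Finset (Fin m) := Finset.univ.filter (fun j' => ∀ i' < i, j' ∉ S i') with hT
      have hzT : ∀ j' ∉ T, d j' = 0 := by
        intro j' hj'
        simp only [hT, Finset.mem_filter, Finset.mem_univ, true_and] at hj'
        push_neg at hj'
        obtain ⟨i', hi', hji'⟩ := hj'
        exact IH i' hi' (by omega) j' hji'
      have hsub : T ⊆ (Finset.Icc i t).biUnion S := by
        intro j' hj'
        simp only [hT, Finset.mem_filter, Finset.mem_univ, true_and] at hj'
        obtain ⟨i'', hi''t, hj''⟩ := hcover j'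
        refine Finset.mem_biUnion.mpr ⟨i'', ?_, hj''⟩
        rw [Finset.mem_Icc]
        refine ⟨?_, hi''t⟩
        by_contra h
        exact hj' i'' (by omega) hj''
      have hcardT : T.card ≤ shat i := by
        calc T.card ≤ ((Finset.Icc i t).biUnion S).card := Finset.card_le_card hsub
          _ ≤ ∑ i' ∈ Finset.Icc i t, (S i').card := Finset.card_biUnion_le
          _ ≤ ∑ i' ∈ Finset.Icc i t, s i' := Finset.sum_le_sum (fun i' hi' => by
              rw [Finset.mem_Icc] at hi'
              exact hSi i' (by omega) hi'.2)
          _ = shat i := (hshat i).symm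
      have hsyn : ∀ r < shat i, (∑ j' : Fin m, α ^ (r * (j' : ℕ)) • d j') ∈ C i := by
        intro r hr
        have h1 := hc.2 i hi1 hit r hr
        have h2 := hc'.2 i hi1 hit r hr
        have h3 := Submodule.sub_mem _ h1 h2
        convert h3 using 1
        rw [← Finset.sum_sub_distrib]
        exact Finset.sum_congr rfl fun j' _ => by
          simp only [hd]
          rw [smul_sub]
      have hmem := key_lemma α hα (C i) d T (shat i) hcardT hzT hsyn j
      exact hcorr i hit j hjS _ hmem hEj
end

section
/- Let c and c′ be codewords of the EII code C, and for each 0 ≤ j ≤ m−1 let E_j ⊆ {0,…,n−1} be a set of (erased) positions such that c_j and c′_j agree at every position outside E_j. Suppose the index set {0,…,m−1} can be partitioned into pairwise disjoint sets S_0, S_1, …, S_t with |S_0| ≥ s_0 and |S_i| ≤ s_i for 1 ≤ i ≤ t, such that |E_j| ≤ d_i − 1 for every 0 ≤ i ≤ t−1 and every j ∈ S_i, where d_i denotes the minimum distance of C_i (the sets E_j for j ∈ S_t may be arbitrary). Then c = c′. In particular, if each C_i (0 ≤ i ≤ t−1) is an [n, n−u_i, u_i+1] MDS code, then C corrects up to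 u_i erasures in each row c_j with j ∈ S_i and arbitrarily many erasures in each row with index in S_t. -/
lemma vand_mem {F : Type*} [Field F] {n : ℕ} (M : Submodule F (Fin n → F))
    {N : ℕ} (v : Fin N → F) (hv : Function.Injective v)
    (e : Fin N → Fin n → F)
    (h : ∀ r : Fin N, (∑ k, v k ^ (r : ℕ) • e k) ∈ M) :
    ∀ k, e k ∈ M := by
  set V : Matrix (Fin N) (Fin N) F := fun r k => v k ^ (r : ℕ) with hV
  have hVt : V = Matrix.transpose (Matrix.vandermonde v) := by
    ext r k; simp [hV, Matrix.vandermonde, Matrix.transpose_apply]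
  have hdet : IsUnit V.det := by
    rw [hVt, Matrix.det_transpose, Matrix.det_vandermonde]
    refine (Finset.prod_ne_zero_iff.mpr fun i _ =>
      Finset.prod_ne_zero_iff.mpr fun j hj => sub_ne_zero.mpr ?_).isUnit
    exact fun hvij => absurd (hv hvij) (Finset.mem_Ioi.mp hj).ne'
  intro k
  have key : e k = ∑ r, V⁻¹ k r • ∑ k', V r k' • e k' := by
    calc e k = ∑ k', ((1 : Matrix (Fin N) (Fin N) F) k k') • e k' := by
            simp [Matrix.one_apply]
      _ = ∑ k', ((V⁻¹ * V) k k') • e k' := by rw [Matrix.nonsing_inv_mul V hdet]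
      _ = ∑ k', (∑ r, V⁻¹ k r * V r k') • e k' := by simp [Matrix.mul_apply]
      _ = ∑ k', ∑ r, (V⁻¹ k r * V r k') • e k' := by simp [Finset.sum_smul]
      _ = ∑ r, ∑ k', (V⁻¹ k r * V r k') • e k' := Finset.sum_comm
      _ = ∑ r, V⁻¹ k r • ∑ k', V r k' • e k' := by
            simp [Finset.smul_sum, smul_smul]
  rw [key]
  exact Submodule.sum_mem _ fun r _ => Submodule.smul_mem _ _ (h r)

/-- Corollary: erasure correction up to the minimum distances.

Same EII context as Statement 0.  `d i` is the minimum distance of `C i`, i.e. the least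
Hamming weight of a nonzero codeword of `C i` (for `0 ≤ i ≤ t-1`).  If `c, c'` are
codewords of the EII code agreeing outside erasure sets `E j`, and the rows are
partitioned into disjoint sets `S 0, …, S t` with `|S 0| ≥ s 0`, `|S i| ≤ s i` for
`1 ≤ i ≤ t`, such that `|E j| ≤ d i - 1` for `j ∈ S i`, `0 ≤ i ≤ t-1` (the sets `E j`
for `j ∈ S t` being arbitrary), then `c = c'`. -/
theorem stmt_1
    {F : Type*} [Field F] [Fintype F] [DecidableEq F]
    (n t : ℕ) (hn : 1 ≤ n) (ht : 1 ≤ t)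
    (C : ℕ → Submodule F (Fin n → F))
    (hCt : C t = ⊥)
    (hnest : ∀ i, i < t → C (i + 1) < C i)
    (s : ℕ → ℕ) (m : ℕ)
    (hm : m = ∑ i ∈ Finset.range (t + 1), s i) (hm1 : 1 ≤ m)
    (α : F) (hα : m ≤ orderOf α)
    (shat : ℕ → ℕ) (hshat : ∀ i, shat i = ∑ j ∈ Finset.Icc i t, s j)
    (d : ℕ → ℕ)
    (hd : ∀ i, i < t →
      IsLeast {w : ℕ | ∃ x ∈ C i, x ≠ 0 ∧ hammingNorm x = w} (d i))
    (c c' : Fin m → Fin n → F)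
    (hc : (∀ j, c j ∈ C 0) ∧ ∀ i, 1 ≤ i → i ≤ t → ∀ r, r < shat i →
        (∑ j : Fin m, α ^ (r * (j : ℕ)) • c j) ∈ C i)
    (hc' : (∀ j, c' j ∈ C 0) ∧ ∀ i, 1 ≤ i → i ≤ t → ∀ r, r < shat i →
        (∑ j : Fin m, α ^ (r * (j : ℕ)) • c' j) ∈ C i)
    (E : Fin m → Finset (Fin n))
    (hagree : ∀ j : Fin m, ∀ k : Fin n, k ∉ E j → c j k = c' j k)
    (S : ℕ → Finset (Fin m))
    (hdisj : ∀ i ≤ t, ∀ i' ≤ t, i ≠ i' → Disjoint (S i) (S i'))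
    (hcover : ∀ j : Fin m, ∃ i ≤ t, j ∈ S i)
    (hS0 : s 0 ≤ (S 0).card)
    (hSi : ∀ i, 1 ≤ i → i ≤ t → (S i).card ≤ s i)
    (hE : ∀ i, i < t → ∀ j ∈ S i, (E j).card ≤ d i - 1) :
    c = c' := by
  obtain ⟨hc0, hcs⟩ := hc
  obtain ⟨hc0', hcs'⟩ := hc'
  set e : Fin m → Fin n → F := fun j => c j - c' j with he
  -- any codeword of C i with weight ≤ d i - 1 is zero
  have hzero : ∀ i, i < t → ∀ x ∈ C i, hammingNorm x ≤ d i - 1 → x = 0 := by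
    intro i hi x hx hwx
    by_contra hx0
    have h1 : d i ≤ hammingNorm x := (hd i hi).2 ⟨x, hx, hx0, rfl⟩
    obtain ⟨x0, hx0C, hx0ne, hx0w⟩ := (hd i hi).1
    have h2 : 1 ≤ d i := by
      rw [← hx0w]
      exact Nat.one_le_iff_ne_zero.mpr fun h => hx0ne (hammingNorm_eq_zero.mp h)
    omega
  have hwE : ∀ j, hammingNorm (e j) ≤ (E j).card := by
    intro j
    apply Finset.card_le_card
    intro k hk
    rw [Finset.mem_filter] at hk
    by_contra hkE
    exact hk.2 (sub_eq_zero.mpr (hagree j k hkE))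
  have heC0 : ∀ j, e j ∈ C 0 := fun j => Submodule.sub_mem _ (hc0 j) (hc0' j)
  have hesum : ∀ i, 1 ≤ i → i ≤ t → ∀ r, r < shat i →
      (∑ j : Fin m, α ^ (r * (j : ℕ)) • e j) ∈ C i := by
    intro i h1 h2 r hr
    have h := Submodule.sub_mem _ (hcs i h1 h2 r hr) (hcs' i h1 h2 r hr)
    have heq : (∑ j : Fin m, α ^ (r * (j : ℕ)) • e j) =
        (∑ j : Fin m, α ^ (r * (j : ℕ)) • c j)
          - (∑ j : Fin m, α ^ (r * (j : ℕ)) • c' j) := by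
      rw [← Finset.sum_sub_distrib]
      exact Finset.sum_congr rfl fun j _ => smul_sub _ _ _
    rwa [heq]
  have main : ∀ i, i ≤ t → ∀ j ∈ S i, e j = 0 := by
    intro i
    induction i using Nat.strong_induction_on with
    | _ i IH =>
      intro hit j hjS
      rcases Nat.eq_zero_or_pos i with hi0 | hi1
      · subst hi0
        exact hzero 0 ht _ (heC0 j) (le_trans (hwE j) (hE 0 ht j hjS))
      · set U : Finset (Fin m) := (Finset.Icc i t).biUnion S with hU
        have hjU : j ∈ U := Finset.mem_biUnion.mpr ⟨i, Finset.mem_Icc.mpr ⟨le_rfl, hit⟩, hjS⟩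
        have hcard : U.card ≤ shat i := by
          rw [hU, hshat, Finset.card_biUnion (fun a ha b hb hab =>
            hdisj a (Finset.mem_Icc.mp ha).2 b (Finset.mem_Icc.mp hb).2 hab)]
          exact Finset.sum_le_sum fun i' hi' =>
            hSi i' (le_trans hi1 (Finset.mem_Icc.mp hi').1) (Finset.mem_Icc.mp hi').2
        have hout : ∀ j' : Fin m, j' ∉ U → e j' = 0 := by
          intro j' hj'
          obtain ⟨i'', hi''t, hj''⟩ := hcover j'
          have hlt : i'' < i := by
            by_contra h
            exact hj' (Finset.mem_biUnion.mpr
              ⟨i'', Finset.mem_Icc.mpr ⟨Nat.le_of_not_lt h, hi''t⟩, hj''⟩)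
          exact IH i'' hlt hi''t j' hj''
        have hsumU : ∀ r, r < shat i →
            (∑ j' ∈ U, (α ^ ((j' : Fin m) : ℕ)) ^ r • e j') ∈ C i := by
          intro r hr
          have h := hesum i hi1 hit r hr
          have heq : (∑ j' ∈ U, (α ^ ((j' : Fin m) : ℕ)) ^ r • e j')
              = ∑ j' : Fin m, α ^ (r * (j' : ℕ)) • e j' := by
            rw [← Finset.sum_subset (Finset.subset_univ U)
              (fun j' _ hj' => by rw [hout j' hj', smul_zero])]
            exact Finset.sum_congr rfl fun j' _ => by rw [← pow_mul, mul_comm]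
          rwa [heq]
        set N := U.card with hN
        set g : Fin N ≃ {x // x ∈ U} := U.equivFin.symm with hg
        have hv : Function.Injective (fun k : Fin N => α ^ (((g k : Fin m)) : ℕ)) := by
          intro k k' hkk'
          have h1 : (((g k : Fin m)) : ℕ) = (((g k' : Fin m)) : ℕ) :=
            pow_injOn_Iio_orderOf (Set.mem_Iio.mpr (lt_of_lt_of_le (g k : Fin m).isLt hα))
              (Set.mem_Iio.mpr (lt_of_lt_of_le (g k' : Fin m).isLt hα)) hkk'
          exact g.injective (Subtype.ext (Fin.ext h1))
        have hmem : ∀ k : Fin N, e (g k : Fin m) ∈ C i := by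
          apply vand_mem (C i) _ hv
          intro r
          have hr : (r : ℕ) < shat i := lt_of_lt_of_le r.isLt hcard
          have h := hsumU r hr
          have heq : (∑ k : Fin N, (α ^ (((g k : Fin m)) : ℕ)) ^ (r : ℕ) • e (g k : Fin m))
              = ∑ j' ∈ U, (α ^ ((j' : Fin m) : ℕ)) ^ (r : ℕ) • e j' := by
            calc (∑ k : Fin N, (α ^ (((g k : Fin m)) : ℕ)) ^ (r : ℕ) • e (g k : Fin m))
                = ∑ x : {x // x ∈ U}, (α ^ (((x : Fin m)) : ℕ)) ^ (r : ℕ) • e (x : Fin m) :=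
                  Equiv.sum_comp g
                    (fun x : {x // x ∈ U} => (α ^ (((x : Fin m)) : ℕ)) ^ (r : ℕ) • e (x : Fin m))
              _ = ∑ j' ∈ U, (α ^ ((j' : Fin m) : ℕ)) ^ (r : ℕ) • e j' := by
                  rw [Finset.univ_eq_attach]
                  exact Finset.sum_attach U
                    (fun j' => (α ^ ((j' : Fin m) : ℕ)) ^ (r : ℕ) • e j')
          rwa [heq]
        have hejCi : e j ∈ C i := by
          have h := hmem (g.symm ⟨j, hjU⟩)
          simpa using h
        rcases eq_or_lt_of_le hit with hit' | hit'
        · rw [hit', hCt, Submodule.mem_bot] at hejCi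
          exact hejCi
        · exact hzero i hit' _ hejCi (le_trans (hwE j) (hE i hit' j hjS))
  funext j
  obtain ⟨i, hit, hji⟩ := hcover j
  exact sub_eq_zero.mp (main i hit j hji)
end

section
/- Let u_i = n − dim_F(C_i) for 0 ≤ i ≤ t (so u_t = n). Then the EII code C is a linear code of length m·n over F with dimension dim_F(C) = m·n − Σ_{i=0}^{t} s_i·u_i. -/
open Finset

/-- The submodule `Submodule.pi Set.univ p` is linearly equivalent to the product `Π i, p i`. -/
def piUnivEquiv {F : Type*} [Field F] {ι : Type*} {φ : ι → Type*}
    [∀ i, AddCommGroup (φ i)] [∀ i, Module F (φ i)]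
    (p : ∀ i, Submodule F (φ i)) :
    (Submodule.pi Set.univ p) ≃ₗ[F] ∀ i, p i where
  toFun x i := ⟨x.1 i, x.2 i trivial⟩
  map_add' x y := rfl
  map_smul' c x := rfl
  invFun y := ⟨fun i => (y i : φ i), fun i _ => (y i).2⟩
  left_inv x := rfl
  right_inv y := rfl

/-- dimension of an EII code, Theorem `cor00` of the paper.

Same EII context.  The EII code is realized as a submodule of `Fin m → Fin n → F`
(an intersection of preimages of the nested codes under linear maps: `x` belongs to
it iff every row `x j ∈ C 0` and `∑ j, α ^ (r*j) • x j ∈ C i` for `1 ≤ i ≤ t`,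
`r < ŝ i`).  With `u i = n - dim C i` (so `u t = n`), its dimension is
`m·n - ∑_{i=0}^{t} s i · u i`. -/
theorem stmt_2
    {F : Type*} [Field F] [Fintype F] [DecidableEq F]
    (n t : ℕ) (hn : 1 ≤ n) (ht : 1 ≤ t)
    (C : ℕ → Submodule F (Fin n → F))
    (hCt : C t = ⊥)
    (hnest : ∀ i, i < t → C (i + 1) < C i)
    (s : ℕ → ℕ) (m : ℕ)
    (hm : m = ∑ i ∈ Finset.range (t + 1), s i) (hm1 : 1 ≤ m)
    (α : F) (hα : m ≤ orderOf α)
    (shat : ℕ → ℕ) (hshat : ∀ i, shat i = ∑ j ∈ Finset.Icc i t, s j)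
    (u : ℕ → ℕ) (hu : ∀ i ≤ t, u i = n - Module.finrank F (C i)) :
    Module.finrank F
      ↥((⨅ j : Fin m, (C 0).comap
          (LinearMap.proj (R := F) (φ := fun _ : Fin m => Fin n → F) j)) ⊓
        ⨅ i ∈ Finset.Icc 1 t, ⨅ r ∈ Finset.range (shat i), (C i).comap
          (∑ j : Fin m, α ^ (r * (j : ℕ)) •
            LinearMap.proj (R := F) (φ := fun _ : Fin m => Fin n → F) j))
      = m * n - ∑ i ∈ Finset.range (t + 1), s i * u i := by
  classical
  set d : ℕ → ℕ := fun i => Module.finrank F (C i) with hd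
  -- monotonicity of the chain of codes
  have hCle : ∀ i j, i ≤ j → j ≤ t → C j ≤ C i := by
    have h : ∀ k i, i + k ≤ t → C (i + k) ≤ C i := by
      intro k
      induction k with
      | zero => intro i _; exact le_rfl
      | succ k ih =>
        intro i hik
        have h1 : C (i + k + 1) ≤ C (i + k) := le_of_lt (hnest (i + k) (by omega))
        have h2 : C (i + (k + 1)) = C (i + k + 1) := by ring_nf
        exact h2.le.trans (h1.trans (ih i (by omega)))
    intro i j hij hjt
    have := h (j - i) i (by omega)
    rwa [show i + (j - i) = j by omega] at this
  -- facts about shat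
  have hshat0 : shat 0 = m := by
    rw [hshat, hm]
    congr 1
    ext x
    simp [Nat.lt_succ_iff]
  have hanti : ∀ i j, i ≤ j → shat j ≤ shat i := by
    intro i j hij
    rw [hshat, hshat]
    exact Finset.sum_le_sum_of_subset (Finset.Icc_subset_Icc_left hij)
  have hshatm : ∀ i, shat i ≤ m := fun i => hshat0 ▸ hanti 0 i (Nat.zero_le _)
  have hstep : ∀ i, i ≤ t → shat i = s i + shat (i + 1) := by
    intro i hit
    rw [hshat, hshat, Finset.Icc_add_one_left_eq_Ioc, Finset.Icc_eq_cons_Ioc hit, Finset.sum_cons]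
  have hshatt1 : shat (t + 1) = 0 := by
    rw [hshat, Finset.Icc_eq_empty (by omega), Finset.sum_empty]
  -- the index function b
  set b : ℕ → ℕ := fun r => Nat.findGreatest (fun i => r < shat i) t with hb
  have hbt : ∀ r, b r ≤ t := fun r => Nat.findGreatest_le t
  have hbr : ∀ r, r < m → r < shat (b r) := by
    intro r hr
    exact Nat.findGreatest_spec (P := fun i => r < shat i) (Nat.zero_le t)
      (show r < shat 0 by rwa [hshat0])
  have hble : ∀ r, ∀ i ≤ t, r < shat i → i ≤ b r := by
    intro r i hi h
    exact Nat.le_findGreatest hi h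
  have hbsucc : ∀ r, r < m → shat (b r + 1) ≤ r := by
    intro r hr
    by_contra hcon
    push_neg at hcon
    rcases Nat.lt_or_ge (b r) t with h | h
    · have h7 : b r + 1 ≤ b r :=
        Nat.le_findGreatest (P := fun i => r < shat i) (by omega : b r + 1 ≤ t) hcon
      omega
    · have hbeq : b r = t := le_antisymm (hbt r) h
      rw [hbeq, hshatt1] at hcon
      omega
  -- the Vandermonde matrix and its inverse
  set v : Fin m → F := fun r => α ^ (r : ℕ) with hv
  have hinj : Function.Injective v := by
    intro r r' h
    exact Fin.ext (pow_injOn_Iio_orderOf (lt_of_lt_of_le r.2 hα) (lt_of_lt_of_le r'.2 hα) h)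
  set V : Matrix (Fin m) (Fin m) F := Matrix.vandermonde v with hV
  have hdet : IsUnit V.det :=
    isUnit_iff_ne_zero.mpr (Matrix.det_vandermonde_ne_zero_iff.mpr hinj)
  set W : Matrix (Fin m) (Fin m) F := V⁻¹ with hW
  have hWV : W * V = 1 := Matrix.nonsing_inv_mul V hdet
  have hVW : V * W = 1 := Matrix.mul_nonsing_inv V hdet
  -- the transform T and its inverse S
  set T : (Fin m → Fin n → F) →ₗ[F] (Fin m → Fin n → F) :=
    LinearMap.pi (fun r => ∑ j, V r j • LinearMap.proj j) with hT
  set S : (Fin m → Fin n → F) →ₗ[F] (Fin m → Fin n → F) :=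
    LinearMap.pi (fun j => ∑ r, W j r • LinearMap.proj r) with hS
  have hTapp : ∀ x r, T x r = ∑ j, V r j • x j := by
    intro x r
    simp [hT, LinearMap.pi_apply, LinearMap.sum_apply, LinearMap.smul_apply, LinearMap.proj_apply]
  have hSapp : ∀ x j, S x j = ∑ r, W j r • x r := by
    intro x j
    simp [hS, LinearMap.pi_apply, LinearMap.sum_apply, LinearMap.smul_apply, LinearMap.proj_apply]
  have hmulapp : ∀ (A B : Matrix (Fin m) (Fin m) F) (x : Fin m → Fin n → F) (j : Fin m),
      ∑ r, A j r • ∑ j', B r j' • x j' = ∑ j', (A * B) j j' • x j' := by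
    intro A B x j
    simp_rw [Finset.smul_sum, smul_smul]
    rw [Finset.sum_comm]
    simp_rw [Matrix.mul_apply, Finset.sum_smul]
  have hST : ∀ x, S (T x) = x := by
    intro x
    funext j
    rw [hSapp]
    simp_rw [hTapp]
    rw [hmulapp, hWV]
    simp [Matrix.one_apply, ite_smul]
  have hTS : ∀ x, T (S x) = x := by
    intro x
    funext r
    rw [hTapp]
    simp_rw [hSapp]
    rw [hmulapp, hVW]
    simp [Matrix.one_apply, ite_smul]
  set e : (Fin m → Fin n → F) ≃ₗ[F] (Fin m → Fin n → F) :=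
    LinearEquiv.ofLinear T S (LinearMap.ext hTS) (LinearMap.ext hST) with he
  -- the target product of codes
  set D : Fin m → Submodule F (Fin n → F) := fun r => C (b (r : ℕ)) with hD
  -- the key identity on the linear maps in the statement
  have hmap : ∀ (x : Fin m → Fin n → F) (r : Fin m),
      (∑ j : Fin m, α ^ ((r : ℕ) * (j : ℕ)) •
        LinearMap.proj (R := F) (φ := fun _ : Fin m => Fin n → F) j) x = T x r := by
    intro x r
    rw [hTapp]
    simp [hV, Matrix.vandermonde_apply, hv, pow_mul]
  -- identification of the EII code as a comap
  have hEeq : ((⨅ j : Fin m, (C 0).comap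
          (LinearMap.proj (R := F) (φ := fun _ : Fin m => Fin n → F) j)) ⊓
        ⨅ i ∈ Finset.Icc 1 t, ⨅ r ∈ Finset.range (shat i), (C i).comap
          (∑ j : Fin m, α ^ (r * (j : ℕ)) •
            LinearMap.proj (R := F) (φ := fun _ : Fin m => Fin n → F) j))
      = Submodule.comap (e : (Fin m → Fin n → F) →ₗ[F] (Fin m → Fin n → F))
          (Submodule.pi Set.univ D) := by
    ext x
    simp only [Submodule.mem_inf, Submodule.mem_iInf, Submodule.mem_comap,
      LinearMap.proj_apply, Submodule.mem_pi, Set.mem_univ, forall_true_left]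
    have hex : ∀ y, (e : (Fin m → Fin n → F) →ₗ[F] (Fin m → Fin n → F)) y = T y := fun y => rfl
    rw [hex]
    constructor
    · rintro ⟨h0, h1⟩ r
      rcases Nat.eq_zero_or_pos (b (r : ℕ)) with hb0 | hbpos
      · have : D r = C 0 := by rw [hD]; simp [hb0]
        rw [this, hTapp]
        exact Submodule.sum_mem _ fun j _ => Submodule.smul_mem _ _ (h0 j)
      · have hr1 : b (r : ℕ) ∈ Finset.Icc 1 t := Finset.mem_Icc.mpr ⟨hbpos, hbt _⟩
        have hr2 : (r : ℕ) ∈ Finset.range (shat (b (r : ℕ))) :=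
          Finset.mem_range.mpr (hbr _ r.2)
        have := h1 (b (r : ℕ)) hr1 (r : ℕ) hr2
        rwa [hmap x r] at this
    · intro h
      refine ⟨?_, ?_⟩
      · intro j
        have hx : x j = ∑ r, W j r • T x r := by
          conv_lhs => rw [← hST x]
          rw [hSapp]
        rw [hx]
        refine Submodule.sum_mem _ fun r _ => Submodule.smul_mem _ _ ?_
        exact hCle 0 (b (r : ℕ)) (Nat.zero_le _) (hbt _) (h r)
      · intro i hi r hr
        have hiIcc := Finset.mem_Icc.mp hi
        have hrm : r < m := lt_of_lt_of_le (Finset.mem_range.mp hr) (hshatm i)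
        have hrF : (⟨r, hrm⟩ : Fin m) = ⟨r, hrm⟩ := rfl
        have := h (⟨r, hrm⟩ : Fin m)
        have hsub : C (b r) ≤ C i :=
          hCle i (b r) (hble r i hiIcc.2 (Finset.mem_range.mp hr)) (hbt r)
        have hmem : T x (⟨r, hrm⟩ : Fin m) ∈ C i := hsub this
        rw [← hmap x ⟨r, hrm⟩] at hmem
        exact hmem
  rw [hEeq, Submodule.comap_equiv_eq_map_symm, LinearEquiv.finrank_map_eq,
    (piUnivEquiv D).finrank_eq, Module.finrank_pi_fintype]
  -- counting
  have hcount : ∑ r : Fin m, d (b (r : ℕ)) = ∑ i ∈ Finset.range (t + 1), s i * d i := by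
    rw [Fin.sum_univ_eq_sum_range (fun r => d (b r)) m]
    have key : ∀ r ∈ Finset.range m, d (b r) =
        ∑ i ∈ Finset.range (t + 1), if shat (i + 1) ≤ r ∧ r < shat i then d i else 0 := by
      intro r hrm
      have hr : r < m := Finset.mem_range.mp hrm
      rw [Finset.sum_eq_single (b r)]
      · rw [if_pos ⟨hbsucc r hr, hbr r hr⟩]
      · intro i hi hne
        rw [if_neg]
        rintro ⟨h1, h2⟩
        have hit : i ≤ t := by
          have := Finset.mem_range.mp hi; omega
        have h3 : i ≤ b r := hble r i hit h2
        have h4 : b r ≤ i := by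
          by_contra hcon
          have h5 : shat (b r) ≤ shat (i + 1) := hanti _ _ (by omega)
          have h6 := hbr r hr
          omega
        omega
      · intro hcon
        exact absurd (Finset.mem_range.mpr (by have := hbt r; omega)) hcon
    rw [Finset.sum_congr rfl key, Finset.sum_comm]
    refine Finset.sum_congr rfl fun i hi => ?_
    have hit : i ≤ t := by have := Finset.mem_range.mp hi; omega
    have hfilter : Finset.filter (fun r => shat (i + 1) ≤ r ∧ r < shat i) (Finset.range m)
        = Finset.Ico (shat (i + 1)) (shat i) := by
      ext r
      simp only [Finset.mem_filter, Finset.mem_range, Finset.mem_Ico]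
      have := hshatm i
      constructor
      · rintro ⟨_, h1, h2⟩; exact ⟨h1, h2⟩
      · rintro ⟨h1, h2⟩; exact ⟨by omega, h1, h2⟩
    rw [← Finset.sum_filter, hfilter, Finset.sum_const, Nat.card_Ico, smul_eq_mul]
    have := hstep i hit
    have : shat i - shat (i + 1) = s i := by omega
    rw [this, mul_comm]
  have hDd : ∀ r : Fin m, Module.finrank F (D r) = d (b (r : ℕ)) := fun r => rfl
  rw [Finset.sum_congr rfl (fun r _ => hDd r), hcount]
  -- final arithmetic
  have hdle : ∀ i, i ≤ t → d i ≤ n := by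
    intro i _
    have h1 : d i ≤ Module.finrank F (Fin n → F) := Submodule.finrank_le (C i)
    rwa [Module.finrank_pi, Fintype.card_fin] at h1
  have hsum : ∑ i ∈ Finset.range (t + 1), s i * u i + ∑ i ∈ Finset.range (t + 1), s i * d i
      = m * n := by
    rw [← Finset.sum_add_distrib]
    have hterm : ∀ i ∈ Finset.range (t + 1), s i * u i + s i * d i = s i * n := by
      intro i hi
      have hit : i ≤ t := by have := Finset.mem_range.mp hi; omega
      have h1 := hu i hit
      have h2 := hdle i hit
      have h3 : d i = Module.finrank F ↥(C i) := rfl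
      rw [← Nat.mul_add]
      congr 1
      omega
    rw [Finset.sum_congr rfl hterm, ← Finset.sum_mul, ← hm]
  omega
end

section
/- Let u_i = n − dim_F(C_i) for 0 ≤ i ≤ t (so u_t = n), and suppose each C_i is systematic on its first n − u_i coordinates, i.e., the projection of C_i onto the coordinates {0,…,n−u_i−1} is a bijection from C_i onto F^{n−u_i}. Call a position (j,k) (row j, column k) a data position if, letting i be the unique index with s_0+⋯+s_{i−1} ≤ j < s_0+⋯+s_i, one has 0 ≤ k ≤ n−u_i−1. Then for every assignment of values in F to the data positions there is exactly one codeword c of the EII code C that agrees with the given assignment at all data positions; in particular the number of data positions is m·n − Σ_{i=0}^{t} s_i·u_i. -/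
/-!
The twisted row sums `T c r = ∑ⱼ α ^ (r * j) • c j` form an invertible Vandermonde transform, and
the EII constraints say exactly that `T c r ∈ C (lev (m - 1 - r))`, where `lev j` is the level of
row `j`. Hence the EII code has dimension `∑ⱼ dim C (lev j)`, the number of data positions.
A codeword vanishing on the data positions is zero, row by row: once all rows of level below `i`
vanish, the `ŝ i` sums required to lie in `C i` involve only the last `ŝ i` rows and form a
Vandermonde system in them, forcing those rows into `C i`; systematic encoding of `C i` then kills
the rows of level `i`. Injectivity and equality of dimensions make the data map bijective.
-/

open Finset Polynomial

theorem Fin.card_filter_le_val (m b : ℕ) : #{j : Fin m | b ≤ (j : ℕ)} = m - b := by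
  have := Fin.card_filter_val_lt (n := m) (m := b)
  simp only [← not_lt, filter_not, card_sdiff_of_subset (filter_subset _ _), card_univ,
    Fintype.card_fin, this]
  omega

section PowerSums

variable {F V ι : Type*} [Field F] [AddCommGroup V] [Module F V]

theorem Submodule.sum_eval_smul_mem (W : Submodule F V) {s : Finset ι} {x : ι → F} {v : ι → V}
    (h : ∀ r < #s, ∑ i ∈ s, x i ^ r • v i ∈ W) {p : F[X]} (hp : p.natDegree < #s) :
    ∑ i ∈ s, p.eval (x i) • v i ∈ W := by
  simp_rw [eval_eq_sum_range' hp, sum_smul, mul_smul]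
  rw [sum_comm]
  simp_rw [← smul_sum]
  exact W.sum_mem fun r hr => W.smul_mem _ (h r (mem_range.mp hr))

theorem Submodule.mem_of_forall_sum_pow_smul_mem [DecidableEq ι] (W : Submodule F V)
    {s : Finset ι} {x : ι → F} (hx : Set.InjOn x s) {v : ι → V}
    (h : ∀ r < #s, ∑ i ∈ s, x i ^ r • v i ∈ W) {i : ι} (hi : i ∈ s) : v i ∈ W := by
  have hdeg : (Lagrange.basis s x i).natDegree < #s := by
    rw [Lagrange.natDegree_basis hx hi]
    have := card_pos.mpr ⟨i, hi⟩
    omega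
  -- evaluate against the Lagrange basis polynomial of the node `x i`
  have := W.sum_eval_smul_mem h hdeg
  rwa [sum_eq_single i (fun j hj hji => by rw [Lagrange.eval_basis_of_ne hji.symm hj, zero_smul])
    (absurd hi), Lagrange.eval_basis_self hx hi, one_smul] at this

theorem mem_of_forall_sum_pow_mul_smul_mem {α : F} {m : ℕ} (hα : m ≤ orderOf α)
    (W : Submodule F V) {c : Fin m → V} {b : ℕ} (hc : ∀ j : Fin m, (j : ℕ) < b → c j = 0)
    (h : ∀ r, r + b < m → ∑ j : Fin m, α ^ (r * (j : ℕ)) • c j ∈ W) (j : Fin m) (hj : b ≤ j) :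
    c j ∈ W := by
  refine W.mem_of_forall_sum_pow_smul_mem (s := {j : Fin m | b ≤ (j : ℕ)})
    (x := fun j => α ^ (j : ℕ)) ?_ (fun r hr => ?_) (by simpa using hj)
  · intro j _ k _ hjk
    exact Fin.ext (pow_injOn_Iio_orderOf (by simp; omega) (by simp; omega) hjk)
  · rw [Fin.card_filter_le_val] at hr
    convert h r (by omega) using 1
    simp_rw [← pow_mul, mul_comm _ r]
    exact sum_filter_of_ne fun j _ hj =>
      by_contra fun hbj => hj (by rw [hc j (by omega), smul_zero])

def vandermondeMap (α : F) (m : ℕ) : (Fin m → V) →ₗ[F] (Fin m → V) where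
  toFun c r := ∑ j : Fin m, α ^ ((r : ℕ) * (j : ℕ)) • c j
  map_add' c d := by funext r; simp [smul_add, sum_add_distrib]
  map_smul' a c := by funext r; simp [smul_sum, smul_smul, mul_comm]

theorem vandermondeMap_apply (α : F) (m : ℕ) (c : Fin m → V) (r : Fin m) :
    vandermondeMap α m c r = ∑ j : Fin m, α ^ ((r : ℕ) * (j : ℕ)) • c j := rfl

theorem vandermondeMap_injective {α : F} {m : ℕ} (hα : m ≤ orderOf α) :
    Function.Injective (vandermondeMap (V := V) α m) := by
  rw [← LinearMap.ker_eq_bot, LinearMap.ker_eq_bot']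
  intro c hc
  funext j
  exact (Submodule.mem_bot F).mp <| mem_of_forall_sum_pow_mul_smul_mem hα ⊥ (b := 0) (by simp)
    (fun r hr => (Submodule.mem_bot F).mpr (congr_fun hc ⟨r, by omega⟩)) j (Nat.zero_le _)

end PowerSums

theorem Submodule.finrank_pi_univ {F M ι : Type*} [Field F] [AddCommGroup M] [Module F M]
    [FiniteDimensional F M] [Fintype ι] (p : ι → Submodule F M) :
    Module.finrank F (Submodule.pi Set.univ p) = ∑ i, Module.finrank F (p i) := by
  let f : (∀ i, p i) →ₗ[F] (ι → M) := LinearMap.pi fun i => (p i).subtype ∘ₗ LinearMap.proj i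
  have hf : Function.Injective f := fun x y hxy =>
    funext fun i => Subtype.ext (congr_fun hxy i)
  have hrange : LinearMap.range f = Submodule.pi Set.univ p := by
    ext x
    refine ⟨?_, fun hx => ⟨fun i => ⟨x i, hx i (Set.mem_univ i)⟩, rfl⟩⟩
    rintro ⟨y, rfl⟩ i -
    exact (y i).2
  rw [← hrange, LinearMap.finrank_range_of_inj hf, Module.finrank_pi_fintype]

section EII

variable {F V : Type*} [Field F] [AddCommGroup V] [Module F V]

def eiiCode (C : ℕ → Submodule F V) (t : ℕ) (shat : ℕ → ℕ) (α : F) (m : ℕ) :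
    Submodule F (Fin m → V) where
  carrier := {c | (∀ j, c j ∈ C 0) ∧ ∀ i, 1 ≤ i → i ≤ t → ∀ r, r < shat i →
    ∑ j : Fin m, α ^ (r * (j : ℕ)) • c j ∈ C i}
  add_mem' := by
    rintro c d ⟨hc0, hc⟩ ⟨hd0, hd⟩
    refine ⟨fun j => add_mem (hc0 j) (hd0 j), fun i h1 h2 r hr => ?_⟩
    simpa only [Pi.add_apply, smul_add, sum_add_distrib] using
      add_mem (hc i h1 h2 r hr) (hd i h1 h2 r hr)
  zero_mem' := ⟨fun _ => zero_mem _, fun i _ _ _ _ => by simp⟩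
  smul_mem' a c := by
    rintro ⟨hc0, hc⟩
    refine ⟨fun j => Submodule.smul_mem _ a (hc0 j), fun i h1 h2 r hr => ?_⟩
    simpa only [Pi.smul_apply, smul_comm _ a, ← smul_sum] using
      Submodule.smul_mem _ a (hc i h1 h2 r hr)

/- The row levels are encoded by `hlev : ∀ j i, i ≤ lev j ↔ B i ≤ j`, where `B i` is the first row
of level `i` (in the theorem, `B i = s 0 + ⋯ + s (i - 1)`). -/
variable {C : ℕ → Submodule F V} {t : ℕ} {shat : ℕ → ℕ} {α : F} {m : ℕ}
  {lev : Fin m → ℕ} {B : ℕ → ℕ}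

theorem sum_pow_smul_mem_of_mem_eiiCode (hshat : ∀ i ≤ t, shat i + B i = m) {c : Fin m → V}
    (hc : c ∈ eiiCode C t shat α m) {i : ℕ} (hi : i ≤ t) {r : ℕ} (hr : r + B i < m) :
    ∑ j : Fin m, α ^ (r * (j : ℕ)) • c j ∈ C i := by
  rcases Nat.eq_zero_or_pos i with rfl | hi0
  · exact sum_mem fun j _ => Submodule.smul_mem _ _ (hc.1 j)
  · exact hc.2 i hi0 hi r (by have := hshat i hi; omega)

theorem eiiCode_eq_comap (hC : AntitoneOn C (Set.Iic t)) (hα : m ≤ orderOf α)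
    (hlev_le : ∀ j, lev j ≤ t) (hlev : ∀ j i, i ≤ lev j ↔ B i ≤ j)
    (hshat : ∀ i ≤ t, shat i + B i = m) :
    eiiCode C t shat α m =
      (Submodule.pi Set.univ fun r : Fin m => C (lev r.rev)).comap (vandermondeMap α m) := by
  have hrev : ∀ (r : Fin m) i, i ≤ lev r.rev ↔ (r : ℕ) + B i < m := fun r i => by
    rw [hlev, Fin.val_rev]
    omega
  ext c
  simp only [Submodule.mem_comap, Submodule.mem_pi, Set.mem_univ, true_imp_iff,
    vandermondeMap_apply]
  refine ⟨fun hc r => sum_pow_smul_mem_of_mem_eiiCode hshat hc (hlev_le _) ((hrev r _).mp le_rfl),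
    fun hc => ?_⟩
  have hmem : ∀ (r : Fin m) i, i ≤ lev r.rev →
      ∑ j : Fin m, α ^ ((r : ℕ) * (j : ℕ)) • c j ∈ C i := fun r i hi =>
    hC (hi.trans (hlev_le _)) (hlev_le _) hi (hc r)
  refine ⟨fun j => mem_of_forall_sum_pow_mul_smul_mem hα (C 0) (b := 0) (by simp)
    (fun r hr => hmem ⟨r, by omega⟩ 0 (Nat.zero_le _)) j (Nat.zero_le _), fun i _ hit r hr => ?_⟩
  have := hshat i hit
  exact hmem ⟨r, by omega⟩ i ((hrev _ _).mpr (by simp only; omega))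

theorem finrank_eiiCode [FiniteDimensional F V] (hC : AntitoneOn C (Set.Iic t))
    (hα : m ≤ orderOf α) (hlev_le : ∀ j, lev j ≤ t) (hlev : ∀ j i, i ≤ lev j ↔ B i ≤ j)
    (hshat : ∀ i ≤ t, shat i + B i = m) :
    Module.finrank F (eiiCode C t shat α m) = ∑ j, Module.finrank F (C (lev j)) := by
  let e := LinearEquiv.ofInjectiveEndo _ (vandermondeMap_injective (V := V) hα)
  rw [eiiCode_eq_comap hC hα hlev_le hlev hshat,
    show vandermondeMap α m = (e : _ →ₗ[F] _) from rfl, Submodule.comap_equiv_eq_map_symm,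
    LinearEquiv.finrank_map_eq, Submodule.finrank_pi_univ]
  exact Fintype.sum_equiv Fin.revPerm _ _ fun _ => rfl

end EII

section Systematic

variable {F ι : Type*} [Field F]

def truncateRows (n : ℕ) (w : ι → ℕ) : (ι → Fin n → F) →ₗ[F] ∀ j, Fin (n - w j) → F :=
  LinearMap.pi fun j =>
    LinearMap.funLeft F F (Fin.castLE (Nat.sub_le n (w j))) ∘ₗ LinearMap.proj j

variable {n : ℕ}

theorem truncateRows_eq_iff {w : ι → ℕ} {c a : ι → Fin n → F} :
    truncateRows n w c = truncateRows n w a ↔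
      ∀ j (k : Fin n), (k : ℕ) < n - w j → c j k = a j k :=
  ⟨fun h j k hk => congr_fun (congr_fun h j) ⟨k, hk⟩,
    fun h => funext fun j => funext fun k => h j _ k.2⟩

theorem existsUnique_mem_of_bijective_truncateRows {p : Submodule F (ι → Fin n → F)}
    {w : ι → ℕ} (h : Function.Bijective ((truncateRows n w).domRestrict p)) (a : ι → Fin n → F) :
    ∃! c, c ∈ p ∧ ∀ j (k : Fin n), (k : ℕ) < n - w j → c j k = a j k := by
  obtain ⟨c, hc⟩ := h.2 (truncateRows n w a)
  refine ⟨c, ⟨c.2, truncateRows_eq_iff.mp hc⟩, fun c' ⟨hc', hagree⟩ => ?_⟩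
  have : (truncateRows n w).domRestrict p ⟨c', hc'⟩ = (truncateRows n w).domRestrict p c :=
    (truncateRows_eq_iff.mpr hagree).trans hc.symm
  exact congrArg Subtype.val (h.1 this)

variable {t : ℕ} {C : ℕ → Submodule F (Fin n → F)} {shat : ℕ → ℕ} {α : F} {m : ℕ}
  {lev : Fin m → ℕ} {B : ℕ → ℕ} {u : ℕ → ℕ}

theorem eq_zero_of_mem_eiiCode_of_data_eq_zero (hα : m ≤ orderOf α) (hlev_le : ∀ j, lev j ≤ t)
    (hlev : ∀ j i, i ≤ lev j ↔ B i ≤ j) (hshat : ∀ i ≤ t, shat i + B i = m)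
    (hsys : ∀ i ≤ t, ∀ x ∈ C i, (∀ k : Fin n, (k : ℕ) < n - u i → x k = 0) → x = 0)
    {c : Fin m → Fin n → F} (hc : c ∈ eiiCode C t shat α m)
    (hdata : ∀ j (k : Fin n), (k : ℕ) < n - u (lev j) → c j k = 0) : c = 0 := by
  funext j
  induction j using WellFoundedLT.induction with
  | _ j ih =>
  have hBj : B (lev j) ≤ j := (hlev j _).mp le_rfl
  have hmem : c j ∈ C (lev j) :=
    mem_of_forall_sum_pow_mul_smul_mem hα _ (fun j' hj' => ih j' (by omega))
      (fun r hr => sum_pow_smul_mem_of_mem_eiiCode hshat hc (hlev_le j) hr) j hBj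
  exact hsys _ (hlev_le j) _ hmem (hdata j)

theorem bijective_truncateRows_domRestrict_eiiCode (hC : AntitoneOn C (Set.Iic t))
    (hα : m ≤ orderOf α) (hlev_le : ∀ j, lev j ≤ t) (hlev : ∀ j i, i ≤ lev j ↔ B i ≤ j)
    (hshat : ∀ i ≤ t, shat i + B i = m) (hdim : ∀ i ≤ t, Module.finrank F (C i) = n - u i)
    (hsys : ∀ i ≤ t, ∀ x ∈ C i, (∀ k : Fin n, (k : ℕ) < n - u i → x k = 0) → x = 0) :
    Function.Bijective ((truncateRows n (u ∘ lev)).domRestrict (eiiCode C t shat α m)) := by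
  set f := (truncateRows n (u ∘ lev)).domRestrict (eiiCode C t shat α m)
  have hinj : Function.Injective f := by
    rw [← LinearMap.ker_eq_bot, LinearMap.ker_eq_bot']
    rintro ⟨c, hc⟩ h
    exact Subtype.ext (eq_zero_of_mem_eiiCode_of_data_eq_zero hα hlev_le hlev hshat hsys hc
      fun j k hk => congr_fun (congr_fun h j) ⟨k, hk⟩)
  refine ⟨hinj, (LinearMap.injective_iff_surjective_of_finrank_eq_finrank ?_).mp hinj⟩
  rw [finrank_eiiCode hC hα hlev_le hlev hshat, Module.finrank_pi_fintype]
  simp [hdim _ (hlev_le _)]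

end Systematic

section Levels

theorem Monotone.le_iff_le_of_le_of_lt_succ {α : Type*} [LinearOrder α] {B : ℕ → α}
    (hB : Monotone B) {l : ℕ} {j : α} (h₁ : B l ≤ j) (h₂ : j < B (l + 1)) (i : ℕ) :
    i ≤ l ↔ B i ≤ j :=
  ⟨fun h => (hB h).trans h₁, fun h => not_lt.mp fun h' => h₂.not_ge ((hB h').trans h)⟩

theorem sum_mul_tsub_eq {s u : ℕ → ℕ} {n T : ℕ} (hu : ∀ i < T, u i ≤ n) :
    ∑ i ∈ range T, s i * (n - u i) = (∑ i ∈ range T, s i) * n - ∑ i ∈ range T, s i * u i := by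
  refine Nat.eq_sub_of_add_eq ?_
  rw [← sum_add_distrib, sum_mul]
  exact sum_congr rfl fun i hi => by rw [← mul_add, Nat.sub_add_cancel (hu i (mem_range.mp hi))]

variable {m t : ℕ} {lev : Fin m → ℕ} {B : ℕ → ℕ}

theorem card_filter_lev_eq (hB : Monotone B) (hlev : ∀ j i, i ≤ lev j ↔ B i ≤ j) {i : ℕ}
    (hi : B (i + 1) ≤ m) : #{j : Fin m | lev j = i} = B (i + 1) - B i := by
  have hsplit : univ.filter (fun j : Fin m => lev j = i) =
      univ.filter (fun j : Fin m => B i ≤ (j : ℕ)) \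
        univ.filter (fun j : Fin m => B (i + 1) ≤ (j : ℕ)) := by
    ext j
    simp only [mem_filter, mem_sdiff, mem_univ, true_and, ← hlev]
    omega
  have hBi := hB (Nat.le_succ i)
  have hsub : univ.filter (fun j : Fin m => B (i + 1) ≤ (j : ℕ)) ⊆
      univ.filter (fun j : Fin m => B i ≤ (j : ℕ)) := fun j => by
    simpa only [mem_filter, mem_univ, true_and] using hBi.trans
  rw [hsplit, card_sdiff_of_subset hsub, Fin.card_filter_le_val, Fin.card_filter_le_val]
  omega

theorem sum_comp_lev {M : Type*} [AddCommMonoid M] (hB : Monotone B) (hlev_le : ∀ j, lev j ≤ t)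
    (hlev : ∀ j i, i ≤ lev j ↔ B i ≤ j) (hm : B (t + 1) = m) (g : ℕ → M) :
    ∑ j, g (lev j) = ∑ i ∈ range (t + 1), (B (i + 1) - B i) • g i := by
  rw [← sum_fiberwise_of_maps_to (g := lev) (t := range (t + 1))
    fun j _ => mem_range.mpr (Nat.lt_succ_of_le (hlev_le j))]
  refine sum_congr rfl fun i hi => ?_
  rw [sum_congr rfl fun j hj => by rw [(mem_filter.mp hj).2], sum_const,
    card_filter_lev_eq hB hlev (hm ▸ hB (mem_range.mp hi))]

end Levels

theorem stmt_3_general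
    {F : Type*} [Field F]
    (n t : ℕ)
    (C : ℕ → Submodule F (Fin n → F))
    (hnest : ∀ i, i < t → C (i + 1) < C i)
    (s : ℕ → ℕ) (m : ℕ)
    (hm : m = ∑ i ∈ Finset.range (t + 1), s i)
    (α : F) (hα : m ≤ orderOf α)
    (shat : ℕ → ℕ) (hshat : ∀ i, shat i = ∑ j ∈ Finset.Icc i t, s j)
    (u : ℕ → ℕ) (hu : ∀ i ≤ t, u i = n - Module.finrank F (C i))
    (hsys : ∀ i ≤ t, ∀ y : Fin n → F,
      ∃! x : Fin n → F, x ∈ C i ∧ ∀ k : Fin n, (k : ℕ) < n - u i → x k = y k)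
    (idx : Fin m → ℕ)
    (hidx : ∀ j : Fin m, idx j ≤ t ∧
      (∑ i ∈ Finset.range (idx j), s i) ≤ (j : ℕ) ∧
      (j : ℕ) < ∑ i ∈ Finset.range (idx j + 1), s i) :
    (∀ a : Fin m → Fin n → F,
      ∃! c : Fin m → Fin n → F,
        ((∀ j, c j ∈ C 0) ∧ ∀ i, 1 ≤ i → i ≤ t → ∀ r, r < shat i →
            (∑ j : Fin m, α ^ (r * (j : ℕ)) • c j) ∈ C i) ∧
        ∀ (j : Fin m) (k : Fin n), (k : ℕ) < n - u (idx j) → c j k = a j k) ∧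
    (∑ j : Fin m, (n - u (idx j)) = m * n - ∑ i ∈ Finset.range (t + 1), s i * u i) := by
  set B : ℕ → ℕ := fun i => ∑ k ∈ range i, s k
  have hB : Monotone B := fun i k h => sum_le_sum_of_subset (range_subset_range.mpr h)
  have hidx_le : ∀ j, idx j ≤ t := fun j => (hidx j).1
  have hlev : ∀ j i, i ≤ idx j ↔ B i ≤ j := fun j =>
    hB.le_iff_le_of_le_of_lt_succ (hidx j).2.1 (hidx j).2.2
  have hshat_add : ∀ i ≤ t, shat i + B i = m := fun i hi => by
    rw [hshat, hm, add_comm, ← Ico_add_one_right_eq_Icc, sum_range_add_sum_Ico _ (by omega)]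
  have hC : AntitoneOn C (Set.Iic t) := antitoneOn_of_succ_le Set.ordConnected_Iic
    fun i _ _ hi => (hnest i (Order.succ_le_iff.mp hi)).le
  have hu_le : ∀ i ≤ t, u i ≤ n := fun i hi => hu i hi ▸ Nat.sub_le _ _
  have hdim : ∀ i ≤ t, Module.finrank F (C i) = n - u i := fun i hi => by
    have := (C i).finrank_le
    rw [Module.finrank_fin_fun] at this
    have := hu i hi
    omega
  have hsys_zero : ∀ i ≤ t, ∀ x ∈ C i, (∀ k : Fin n, (k : ℕ) < n - u i → x k = 0) → x = 0 :=
    fun i hi x hx h0 => (hsys i hi 0).unique ⟨hx, h0⟩ ⟨zero_mem _, fun _ _ => rfl⟩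
  refine ⟨existsUnique_mem_of_bijective_truncateRows
    (bijective_truncateRows_domRestrict_eiiCode hC hα hidx_le hlev hshat_add hdim hsys_zero), ?_⟩
  have hs : ∀ i, B (i + 1) - B i = s i := fun i => by simp [B, sum_range_succ]
  rw [sum_comp_lev (g := fun i => n - u i) hB hidx_le hlev hm.symm]
  simp only [hs, smul_eq_mul]
  rw [sum_mul_tsub_eq fun i hi => hu_le i (by omega), ← hm]

/-- systematic encoding of EII codes.

Same EII context, with `u i = n - dim C i` (so `u t = n`).  Each `C i` is assumed
systematic on its first `n - u i` coordinates: for every target vector of values on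
those coordinates there is exactly one codeword of `C i` matching it.  `idx j` is the
unique level of row `j`, i.e. `s 0 + ⋯ + s (idx j - 1) ≤ j < s 0 + ⋯ + s (idx j)`;
a position `(j, k)` is a data position when `k < n - u (idx j)`.

Claim: every assignment of values to the data positions extends to exactly one codeword
of the EII code, and the number of data positions is `m·n - ∑_{i=0}^t s i · u i`. -/
theorem stmt_3
    {F : Type*} [Field F] [Fintype F] [DecidableEq F]
    (n t : ℕ) (hn : 1 ≤ n) (ht : 1 ≤ t)
    (C : ℕ → Submodule F (Fin n → F))
    (hCt : C t = ⊥)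
    (hnest : ∀ i, i < t → C (i + 1) < C i)
    (s : ℕ → ℕ) (m : ℕ)
    (hm : m = ∑ i ∈ Finset.range (t + 1), s i) (hm1 : 1 ≤ m)
    (α : F) (hα : m ≤ orderOf α)
    (shat : ℕ → ℕ) (hshat : ∀ i, shat i = ∑ j ∈ Finset.Icc i t, s j)
    (u : ℕ → ℕ) (hu : ∀ i ≤ t, u i = n - Module.finrank F (C i))
    (hsys : ∀ i ≤ t, ∀ y : Fin n → F,
      ∃! x : Fin n → F, x ∈ C i ∧ ∀ k : Fin n, (k : ℕ) < n - u i → x k = y k)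
    (idx : Fin m → ℕ)
    (hidx : ∀ j : Fin m, idx j ≤ t ∧
      (∑ i ∈ Finset.range (idx j), s i) ≤ (j : ℕ) ∧
      (j : ℕ) < ∑ i ∈ Finset.range (idx j + 1), s i) :
    (∀ a : Fin m → Fin n → F,
      ∃! c : Fin m → Fin n → F,
        ((∀ j, c j ∈ C 0) ∧ ∀ i, 1 ≤ i → i ≤ t → ∀ r, r < shat i →
            (∑ j : Fin m, α ^ (r * (j : ℕ)) • c j) ∈ C i) ∧
        ∀ (j : Fin m) (k : Fin n), (k : ℕ) < n - u (idx j) → c j k = a j k) ∧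
    (∑ j : Fin m, (n - u (idx j)) = m * n - ∑ i ∈ Finset.range (t + 1), s i * u i) :=
  stmt_3_general n t C hnest s m hm α hα shat hshat u hu hsys idx hidx
end

section
/- Assume s_0 ≥ 1, and for 0 ≤ j ≤ t−1 let d_j be the minimum distance of C_j. Then the EII code C is nonzero and its minimum distance equals min{ d_j·(ŝ_{j+1}+1) : 0 ≤ j ≤ t−1 }. -/
/-!
A nonzero codeword `c` with `u` nonzero blocks has its first `ŝ i` power-sum syndromes in `C i`.
Whenever `u ≤ ŝ i`, the Vandermonde system on the support of `c` can be inverted (here through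
a Lagrange polynomial), so every block lies in `C i`. As `C t = 0` and `u ≤ m = ŝ 0`, some
`i < t` has `ŝ (i + 1) < u ≤ ŝ i`; then the `u` nonzero blocks are nonzero words of `C i` and the
weight is at least `(ŝ (i + 1) + 1) · d i`. Conversely, for `x ∈ C j` of weight `d j` and a
vector `β` of weight `ŝ (j + 1) + 1` whose first `ŝ (j + 1)` syndromes vanish (it exists by
counting dimensions), the codeword `(β k • x)ₖ` has weight exactly `(ŝ (j + 1) + 1) · d j`.
-/

open Finset Polynomial

section Syndromes

variable {ι K V : Type*} [Fintype ι] [Field K] [AddCommGroup V] [Module K V]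

theorem mem_of_hammingNorm_le_of_sum_pow_smul_mem [DecidableEq V] (W : Submodule K V)
    {x : ι → K} (hx : Function.Injective x) {g : ι → V} {e : ℕ} (hg : hammingNorm g ≤ e)
    (h : ∀ r < e, ∑ i, x i ^ r • g i ∈ W) (i : ι) : g i ∈ W := by
  classical
  by_cases hgi : g i = 0
  · simp [hgi]
  set S : Finset ι := {j | g j ≠ 0}
  have hiS : i ∈ S := by simpa [S] using hgi
  -- the Lagrange polynomial vanishing at every node of the support except `x i`
  set p : K[X] := ∏ j ∈ S.erase i, (X - C (x j))
  have hdeg : p.natDegree < e := by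
    have : #(S.erase i) < #S := card_erase_lt_of_mem hiS
    simp only [p, natDegree_finsetProd_X_sub_C_eq_card]
    exact this.trans_le hg
  have hpi : p.eval (x i) ≠ 0 := by
    simp only [p, eval_prod, eval_sub, eval_X, eval_C]
    exact prod_ne_zero_iff.mpr fun j hj => sub_ne_zero.mpr (hx.ne (ne_of_mem_erase hj).symm)
  have hsum : ∑ j, p.eval (x j) • g j = p.eval (x i) • g i := by
    refine sum_eq_single i (fun j _ hji => ?_) (by simp)
    by_cases hgj : g j = 0
    · simp [hgj]
    have hj : j ∈ S.erase i := mem_erase.mpr ⟨hji, by simpa [S] using hgj⟩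
    simp [p, eval_prod, prod_eq_zero hj]
  have hmem : ∑ j, p.eval (x j) • g j ∈ W := by
    simp_rw [eval_eq_sum_range' hdeg, sum_smul, mul_smul]
    rw [sum_comm]
    exact W.sum_mem fun r hr => by
      simpa only [← smul_sum] using W.smul_mem _ (h r (mem_range.mp hr))
  rw [hsum] at hmem
  exact (W.smul_mem_iff hpi).mp hmem

theorem exists_hammingNorm_eq_sum_pow_mul_eq_zero [DecidableEq K] {x : ι → K}
    (hx : Function.Injective x) {e : ℕ} (he : e + 1 ≤ Fintype.card ι) :
    ∃ β : ι → K, hammingNorm β = e + 1 ∧ ∀ r < e, ∑ i, x i ^ r * β i = 0 := by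
  classical
  obtain ⟨T, -, hT⟩ := exists_subset_card_eq (s := (univ : Finset ι)) he
  set v : ι → Fin e → K := fun i r => x i ^ (r : ℕ)
  have hdep : ¬ LinearIndepOn K v (T : Set ι) := fun hT' => by
    have := hT'.fintype_card_le_finrank
    simp [hT] at this
  obtain ⟨l, hlT, hl, hl0⟩ := linearDepOn_iff'.mp hdep
  have hsyn : ∀ r < e, ∑ i, x i ^ r * l i = 0 := fun r hr => by
    have := congr_fun hl ⟨r, hr⟩
    simpa [Finsupp.linearCombination_apply, Finsupp.sum_fintype, v, mul_comm] using this
  have hsupp : ∀ i, l i ≠ 0 → i ∈ T := fun i hi => hlT (by simpa using hi)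
  -- a vanishing coordinate would leave a weight-`e` vector with `e` vanishing syndromes
  have hfull : ∀ i ∈ T, l i ≠ 0 := fun i hi hli => hl0 <| Finsupp.ext fun j => by
    have hw : hammingNorm ⇑l ≤ e := by
      calc hammingNorm ⇑l ≤ #(T.erase i) := card_le_card fun k hk => by
              simp only [mem_filter, mem_univ, true_and] at hk
              exact mem_erase.mpr ⟨fun hki => hk (hki ▸ hli), hsupp k hk⟩
        _ = e := by rw [card_erase_of_mem hi, hT]; rfl
    have := mem_of_hammingNorm_le_of_sum_pow_smul_mem (⊥ : Submodule K K) hx hw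
      (fun r hr => by rw [Submodule.mem_bot]; simpa using hsyn r hr) j
    rw [Submodule.mem_bot] at this
    exact this
  refine ⟨l, ?_, hsyn⟩
  rw [← hT, hammingNorm]
  congr 1
  ext i
  simpa using ⟨hsupp i, hfull i⟩

end Syndromes

section HammingBlocks

variable {ι κ K : Type*} [Fintype ι] [Fintype κ] [DecidableEq K]

theorem hammingNorm_uncurry_eq_sum [Zero K] (c : ι → κ → K) :
    hammingNorm (fun p : ι × κ => c p.1 p.2) = ∑ i, hammingNorm (c i) := by
  simp only [hammingNorm, card_filter]
  exact Fintype.sum_prod_type _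

theorem hammingNorm_mul_le_hammingNorm_uncurry [Zero K] {c : ι → κ → K} {d : ℕ}
    (hd : ∀ i, c i ≠ 0 → d ≤ hammingNorm (c i)) :
    hammingNorm c * d ≤ hammingNorm (fun p : ι × κ => c p.1 p.2) := by
  rw [hammingNorm_uncurry_eq_sum, hammingNorm, ← smul_eq_mul]
  exact (card_nsmul_le_sum _ _ _ fun i hi => hd i (mem_filter.mp hi).2).trans
    (sum_le_sum_of_subset (subset_univ _))

theorem hammingNorm_mul_fst_snd [MulZeroClass K] [NoZeroDivisors K] (β : ι → K) (x : κ → K) :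
    hammingNorm (fun p : ι × κ => β p.1 * x p.2) = hammingNorm β * hammingNorm x := by
  simp only [hammingNorm, ← card_product]
  congr 1
  ext p
  simp

end HammingBlocks

theorem Nat.exists_lt_and_not_succ_of_zero_of_not {p : ℕ → Prop} (h0 : p 0) {t : ℕ}
    (ht : ¬ p t) : ∃ i < t, p i ∧ ¬ p (i + 1) := by
  induction t with
  | zero => exact absurd h0 ht
  | succ t ih =>
    by_cases hpt : p t
    · exact ⟨t, t.lt_succ_self, hpt, ht⟩
    · obtain ⟨i, hit, hi⟩ := ih hpt
      exact ⟨i, hit.trans t.lt_succ_self, hi⟩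

theorem injective_pow_of_le_orderOf {M : Type*} [Monoid M] {α : M} {m : ℕ}
    (hα : m ≤ orderOf α) : Function.Injective fun j : Fin m => α ^ (j : ℕ) :=
  fun i j hij => Fin.ext <| pow_injOn_Iio_orderOf (i.isLt.trans_le hα) (j.isLt.trans_le hα) hij

section EII

variable {K V : Type*} [Field K] [AddCommGroup V] [Module K V]

def IsEIICodeword (C : ℕ → Submodule K V) (t : ℕ) (α : K) (shat : ℕ → ℕ) {m : ℕ}
    (c : Fin m → V) : Prop :=
  (∀ j, c j ∈ C 0) ∧ ∀ i, 1 ≤ i → i ≤ t → ∀ r, r < shat i →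
    (∑ j : Fin m, α ^ (r * (j : ℕ)) • c j) ∈ C i

variable {C : ℕ → Submodule K V} {t : ℕ} {α : K} {shat : ℕ → ℕ} {m : ℕ}

theorem IsEIICodeword.mem_of_hammingNorm_le [DecidableEq V] {c : Fin m → V}
    (hc : IsEIICodeword C t α shat c) (hα : m ≤ orderOf α) {i : ℕ} (hit : i ≤ t)
    (hw : hammingNorm c ≤ shat i) (j : Fin m) : c j ∈ C i := by
  rcases Nat.eq_zero_or_pos i with rfl | hi
  · exact hc.1 j
  refine mem_of_hammingNorm_le_of_sum_pow_smul_mem (C i) (injective_pow_of_le_orderOf hα) hw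
    (fun r hr => ?_) j
  simpa only [← pow_mul'] using hc.2 i hi hit r hr

theorem IsEIICodeword.exists_lt_forall_mem [DecidableEq V] {c : Fin m → V}
    (hc : IsEIICodeword C t α shat c) (hα : m ≤ orderOf α) (hCt : C t = ⊥)
    (hm : m ≤ shat 0) (hc0 : c ≠ 0) :
    ∃ i < t, shat (i + 1) < hammingNorm c ∧ ∀ j, c j ∈ C i := by
  have hwt : ¬ hammingNorm c ≤ shat t := fun hw => hc0 <| funext fun j => by
    simpa [hCt] using hc.mem_of_hammingNorm_le hα le_rfl hw j
  have hw0 : hammingNorm c ≤ shat 0 := hammingNorm_le_card_fintype.trans (by simpa using hm)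
  obtain ⟨i, hit, hi, hi1⟩ := Nat.exists_lt_and_not_succ_of_zero_of_not
    (p := fun i => hammingNorm c ≤ shat i) hw0 hwt
  exact ⟨i, hit, not_le.mp hi1, hc.mem_of_hammingNorm_le hα hit.le hi⟩

theorem isEIICodeword_smul {β : Fin m → K} {x : V} {j₀ e : ℕ} (hx : ∀ i ≤ j₀, x ∈ C i)
    (hshat : ∀ i, j₀ < i → shat i ≤ e)
    (hβ : ∀ r < e, ∑ j : Fin m, (α ^ (j : ℕ)) ^ r * β j = 0) :
    IsEIICodeword C t α shat fun j => β j • x := by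
  have hsum : ∀ r, ∑ j : Fin m, α ^ (r * (j : ℕ)) • β j • x
      = (∑ j : Fin m, (α ^ (j : ℕ)) ^ r * β j) • x := fun r => by
    simp_rw [sum_smul, smul_smul, pow_mul']
  refine ⟨fun j => (C 0).smul_mem _ (hx 0 (Nat.zero_le _)), fun i _ _ r hr => ?_⟩
  rcases le_or_gt i j₀ with hij | hij
  · exact (C i).sum_mem fun j _ => (C i).smul_mem _ ((C i).smul_mem _ (hx i hij))
  · rw [hsum, hβ r (hr.trans_le (hshat i hij)), zero_smul]
    exact (C i).zero_mem

theorem exists_isEIICodeword_hammingNorm_eq [DecidableEq K] {n : ℕ}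
    {C : ℕ → Submodule K (Fin n → K)} {x : Fin n → K} {j₀ e : ℕ} (hα : m ≤ orderOf α)
    (hx : ∀ i ≤ j₀, x ∈ C i) (hx0 : x ≠ 0) (hshat : ∀ i, j₀ < i → shat i ≤ e)
    (he : e + 1 ≤ m) :
    ∃ c : Fin m → Fin n → K, IsEIICodeword C t α shat c ∧ c ≠ 0 ∧
      hammingNorm (fun p : Fin m × Fin n => c p.1 p.2) = (e + 1) * hammingNorm x := by
  obtain ⟨β, hβw, hβ⟩ := exists_hammingNorm_eq_sum_pow_mul_eq_zero
    (injective_pow_of_le_orderOf hα) (by simpa using he)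
  obtain ⟨j, hj⟩ := Function.ne_iff.mp (hammingNorm_pos_iff.mp (by omega : 0 < hammingNorm β))
  refine ⟨fun j => β j • x, isEIICodeword_smul hx hshat hβ,
    Function.ne_iff.mpr ⟨j, smul_ne_zero hj hx0⟩, ?_⟩
  rw [← hβw, ← hammingNorm_mul_fst_snd]
  rfl

end EII

theorem stmt_4_general
    {F : Type*} [Field F] [DecidableEq F]
    (n t : ℕ) (ht : 1 ≤ t)
    (C : ℕ → Submodule F (Fin n → F))
    (hCt : C t = ⊥)
    (hnest : ∀ i, i < t → C (i + 1) < C i)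
    (s : ℕ → ℕ) (m : ℕ)
    (hm : m = ∑ i ∈ Finset.range (t + 1), s i)
    (α : F) (hα : m ≤ orderOf α)
    (shat : ℕ → ℕ) (hshat : ∀ i, shat i = ∑ j ∈ Finset.Icc i t, s j)
    (hs0 : 1 ≤ s 0)
    (d : ℕ → ℕ)
    (hd : ∀ j, j < t →
      IsLeast {w : ℕ | ∃ x ∈ C j, x ≠ 0 ∧ hammingNorm x = w} (d j)) :
    IsLeast {w : ℕ | ∃ c : Fin m → Fin n → F,
        ((∀ j, c j ∈ C 0) ∧ ∀ i, 1 ≤ i → i ≤ t → ∀ r, r < shat i →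
            (∑ j : Fin m, α ^ (r * (j : ℕ)) • c j) ∈ C i) ∧
        c ≠ 0 ∧ hammingNorm (fun p : Fin m × Fin n => c p.1 p.2) = w}
      ((Finset.range t).inf'
        (Finset.nonempty_range_iff.mpr (Nat.one_le_iff_ne_zero.mp ht))
        (fun j => d j * (shat (j + 1) + 1))) := by
  have hshat0 : shat 0 = m := by rw [hshat, hm, Nat.range_succ_eq_Icc_zero]
  have hshat1 : s 0 + shat 1 = m := by
    rw [← hshat0, hshat, hshat, ← insert_Icc_add_one_left_eq_Icc (Nat.zero_le t),
      sum_insert (by simp)]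
    rfl
  have hshat_anti : Antitone shat := fun i j hij => by
    simp only [hshat]
    exact sum_le_sum_of_subset (Icc_subset_Icc_left hij)
  have hC_anti : ∀ i j, i ≤ j → j ≤ t → C j ≤ C i := fun i j hij hjt =>
    Nat.decreasingInduction (fun k hk ih => ih.trans (hnest k (by omega)).le) le_rfl hij
  constructor
  · obtain ⟨j₀, hj₀, hmin⟩ := exists_mem_eq_inf' _ fun j => d j * (shat (j + 1) + 1)
    have hj₀t : j₀ < t := mem_range.mp hj₀
    obtain ⟨x, hxC, hx0, hxw⟩ := (hd j₀ hj₀t).1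
    have he : shat (j₀ + 1) + 1 ≤ m := by
      have := hshat_anti (Nat.le_add_left 1 j₀)
      omega
    obtain ⟨c, hc, hc0, hcw⟩ := exists_isEIICodeword_hammingNorm_eq hα
      (fun i hi => hC_anti i j₀ hi hj₀t.le hxC) hx0 (fun i hi => hshat_anti hi) he
    exact ⟨c, hc, hc0, by rw [hcw, hmin, hxw, mul_comm]⟩
  · rintro w ⟨c, hc, hc0, rfl⟩
    obtain ⟨i, hit, hlt, hmem⟩ := IsEIICodeword.exists_lt_forall_mem hc hα hCt hshat0.ge hc0
    calc _ ≤ d i * (shat (i + 1) + 1) := inf'_le _ (mem_range.mpr hit)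
      _ ≤ hammingNorm c * d i := by rw [mul_comm]; gcongr; exact hlt
      _ ≤ _ := hammingNorm_mul_le_hammingNorm_uncurry fun j hj => (hd i hit).2 ⟨c j, hmem j, hj, rfl⟩

/-- minimum distance of an EII code, Theorem `lemma1` of the paper.

Same EII context, with `s 0 ≥ 1`, and `d j` the minimum distance of `C j` for
`0 ≤ j ≤ t-1` (least Hamming weight of a nonzero codeword).  A codeword of the EII
code is viewed as a vector of length `m·n`, its Hamming weight counting all nonzero
entries.  Claim: the EII code is nonzero and its minimum distance equals
`min { d j · (ŝ (j+1) + 1) : 0 ≤ j ≤ t-1 }` (expressed below via `IsLeast`, which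
also asserts the existence of a nonzero codeword of that weight). -/
theorem stmt_4
    {F : Type*} [Field F] [Fintype F] [DecidableEq F]
    (n t : ℕ) (hn : 1 ≤ n) (ht : 1 ≤ t)
    (C : ℕ → Submodule F (Fin n → F))
    (hCt : C t = ⊥)
    (hnest : ∀ i, i < t → C (i + 1) < C i)
    (s : ℕ → ℕ) (m : ℕ)
    (hm : m = ∑ i ∈ Finset.range (t + 1), s i) (hm1 : 1 ≤ m)
    (α : F) (hα : m ≤ orderOf α)
    (shat : ℕ → ℕ) (hshat : ∀ i, shat i = ∑ j ∈ Finset.Icc i t, s j)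
    (hs0 : 1 ≤ s 0)
    (d : ℕ → ℕ)
    (hd : ∀ j, j < t →
      IsLeast {w : ℕ | ∃ x ∈ C j, x ≠ 0 ∧ hammingNorm x = w} (d j)) :
    IsLeast {w : ℕ | ∃ c : Fin m → Fin n → F,
        ((∀ j, c j ∈ C 0) ∧ ∀ i, 1 ≤ i → i ≤ t → ∀ r, r < shat i →
            (∑ j : Fin m, α ^ (r * (j : ℕ)) • c j) ∈ C i) ∧
        c ≠ 0 ∧ hammingNorm (fun p : Fin m × Fin n => c p.1 p.2) = w}
      ((Finset.range t).inf'
        (Finset.nonempty_range_iff.mpr (Nat.one_le_iff_ne_zero.mp ht))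
        (fun j => d j * (shat (j + 1) + 1))) :=
  stmt_4_general n t ht C hCt hnest s m hm α hα shat hshat hs0 d hd
end

section
/- For each 0 ≤ j ≤ t−1 with ŝ_{j+1} < m, the EII code C contains a codeword of Hamming weight exactly d_j·(ŝ_{j+1}+1), where d_j is the minimum distance of C_j. -/
/-!
Take a minimum-weight word `x ∈ C_j` and put `c_i = λ_i • x`, where `λ ∈ F^m` is supported on
`k + 1 = ŝ_{j+1} + 1` positions and is annihilated by the first `k` rows of the Vandermonde
matrix of the distinct nodes `α^0, …, α^{m-1}`. The Lagrange nodal weights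
`λ_i = ∏_{i' ≠ i} (α^i - α^{i'})⁻¹` do this: they are the coefficients of `X^k` in the Lagrange
basis, so `∑ λ_i α^{ri}` is the coefficient of `X^k` in `X^r`. The checks with `i ≤ j` hold
because every `c_i` lies in `C_j ⊆ C_i`, those with `i > j` because the check sums vanish, and
the weight is `wt(λ) · wt(x) = (k + 1) d_j`.
-/

open Finset Polynomial

namespace Lagrange

theorem sum_pow_mul_nodalWeight_eq_zero {F ι : Type*} [Field F] [DecidableEq ι] {s : Finset ι}
    {v : ι → F} (hvs : Set.InjOn v s) {r : ℕ} (hr : r + 1 < #s) :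
    ∑ i ∈ s, v i ^ r * nodalWeight s v i = 0 := by
  have h := coeff_eq_sum hvs (P := X ^ r)
    (by rw [degree_X_pow]; exact_mod_cast (by omega : r < #s))
  rw [coeff_X_pow, if_neg (by omega)] at h
  simp only [eval_pow, eval_X, div_eq_mul_inv, ← prod_inv_distrib] at h
  exact h.symm

end Lagrange

theorem hammingNorm_prod_mul {R ι κ : Type*} [Fintype ι] [Fintype κ] [MulZeroClass R]
    [NoZeroDivisors R] [DecidableEq R] (a : ι → R) (x : κ → R) :
    hammingNorm (fun p : ι × κ => a p.1 * x p.2) = hammingNorm a * hammingNorm x := by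
  simp only [hammingNorm, ← card_product, ← filter_product, univ_product_univ]
  congr 1
  ext p
  simp

theorem exists_hammingNorm_eq_forall_sum_pow_mul_eq_zero {F ι : Type*} [Field F] [DecidableEq F]
    [Fintype ι] [DecidableEq ι] {v : ι → F} (hv : Function.Injective v) {k : ℕ}
    (hk : k < Fintype.card ι) :
    ∃ c : ι → F, hammingNorm c = k + 1 ∧ ∀ r < k, ∑ i, v i ^ r * c i = 0 := by
  obtain ⟨s, -, hs⟩ := exists_subset_card_eq (s := univ) (n := k + 1) (by simpa using hk)
  refine ⟨fun i => if i ∈ s then Lagrange.nodalWeight s v i else 0, ?_, fun r hr => ?_⟩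
  · have hsupp :
        ({i | (if i ∈ s then Lagrange.nodalWeight s v i else 0) ≠ 0} : Finset ι) = s := by
      ext i
      by_cases hi : i ∈ s
      · simp [hi, Lagrange.nodalWeight_ne_zero hv.injOn hi]
      · simp [hi]
    rw [hammingNorm, hsupp, hs]
  · simp only [mul_ite, mul_zero, sum_ite_mem, univ_inter]
    exact Lagrange.sum_pow_mul_nodalWeight_eq_zero hv.injOn (by omega)

theorem stmt_5_general
    {F : Type*} [Field F] [DecidableEq F]
    (n t : ℕ)
    (C : ℕ → Submodule F (Fin n → F))
    (hnest : ∀ i, i < t → C (i + 1) < C i)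
    (s : ℕ → ℕ) (m : ℕ)
    (α : F) (hα : m ≤ orderOf α)
    (shat : ℕ → ℕ) (hshat : ∀ i, shat i = ∑ j ∈ Finset.Icc i t, s j)
    (d : ℕ → ℕ)
    (hd : ∀ j, j < t →
      IsLeast {w : ℕ | ∃ x ∈ C j, x ≠ 0 ∧ hammingNorm x = w} (d j)) :
    ∀ j, j < t → shat (j + 1) < m →
      ∃ c : Fin m → Fin n → F,
        ((∀ j', c j' ∈ C 0) ∧ ∀ i, 1 ≤ i → i ≤ t → ∀ r, r < shat i →
            (∑ j' : Fin m, α ^ (r * (j' : ℕ)) • c j') ∈ C i) ∧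
        hammingNorm (fun p : Fin m × Fin n => c p.1 p.2) = d j * (shat (j + 1) + 1) := by
  intro j hj hk
  obtain ⟨⟨x, hxC, -, hxw⟩, -⟩ := hd j hj
  have hanti : AntitoneOn C (Set.Iic t) :=
    (strictAntiOn_Iic_of_succ_lt fun i hi => by simpa using hnest i hi).antitoneOn
  have hx : ∀ i ≤ j, x ∈ C i := fun i hi => hanti (hi.trans hj.le) hj.le hi hxC
  have hpow : Function.Injective fun j' : Fin m => α ^ (j' : ℕ) := fun a b hab =>
    Fin.ext (pow_injOn_Iio_orderOf (a.2.trans_le hα) (b.2.trans_le hα) hab)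
  obtain ⟨lam, hlam_wt, hlam_sum⟩ :=
    exists_hammingNorm_eq_forall_sum_pow_mul_eq_zero hpow (by simpa using hk)
  refine ⟨fun j' => lam j' • x, ⟨fun j' => Submodule.smul_mem _ _ (hx 0 j.zero_le), ?_⟩, ?_⟩
  · intro i _ _ r hr
    simp only [smul_smul, ← Finset.sum_smul]
    rcases le_or_gt i j with hij | hji
    · exact Submodule.smul_mem _ _ (hx i hij)
    · have hshat_le : shat i ≤ shat (j + 1) := by
        simp only [hshat]
        exact Finset.sum_le_sum_of_subset (Finset.Icc_subset_Icc_left hji)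
      have hzero := hlam_sum r (hr.trans_le hshat_le)
      simp only [← pow_mul, mul_comm _ r] at hzero
      simp [hzero]
  · simp only [Pi.smul_apply, smul_eq_mul]
    rw [hammingNorm_prod_mul, hlam_wt, hxw, mul_comm]

/-- existence of low-weight codewords in an EII code.

Same EII context, with `d j` the minimum distance of `C j`.  For each `0 ≤ j ≤ t-1`
with `ŝ (j+1) < m`, the EII code contains a codeword of Hamming weight exactly
`d j · (ŝ (j+1) + 1)` (the codeword viewed as a vector of length `m·n`). -/
theorem stmt_5
    {F : Type*} [Field F] [Fintype F] [DecidableEq F]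
    (n t : ℕ) (hn : 1 ≤ n) (ht : 1 ≤ t)
    (C : ℕ → Submodule F (Fin n → F))
    (hCt : C t = ⊥)
    (hnest : ∀ i, i < t → C (i + 1) < C i)
    (s : ℕ → ℕ) (m : ℕ)
    (hm : m = ∑ i ∈ Finset.range (t + 1), s i) (hm1 : 1 ≤ m)
    (α : F) (hα : m ≤ orderOf α)
    (shat : ℕ → ℕ) (hshat : ∀ i, shat i = ∑ j ∈ Finset.Icc i t, s j)
    (d : ℕ → ℕ)
    (hd : ∀ j, j < t →
      IsLeast {w : ℕ | ∃ x ∈ C j, x ≠ 0 ∧ hammingNorm x = w} (d j)) :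
    ∀ j, j < t → shat (j + 1) < m →
      ∃ c : Fin m → Fin n → F,
        ((∀ j', c j' ∈ C 0) ∧ ∀ i, 1 ≤ i → i ≤ t → ∀ r, r < shat i →
            (∑ j' : Fin m, α ^ (r * (j' : ℕ)) • c j') ∈ C i) ∧
        hammingNorm (fun p : Fin m × Fin n => c p.1 p.2) = d j * (shat (j + 1) + 1) :=
  stmt_5_general n t C hnest s m α hα shat hshat d hd
end

section
/- Every nonzero codeword of the EII code C has Hamming weight at least min{ d_j·(ŝ_{j+1}+1) : 0 ≤ j ≤ t−1 }, where d_j denotes the minimum distance of C_j for 0 ≤ j ≤ t−1. -/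
lemma aux_vandermonde {F : Type*} [Field F] {M : Type*} [AddCommGroup M] [Module F M]
    {e : ℕ} (v : Fin e → F) (hv : Function.Injective v)
    (w : Fin e → M) (K : Submodule F M)
    (h : ∀ r : Fin e, (∑ k, v k ^ (r : ℕ) • w k) ∈ K) :
    ∀ k, w k ∈ K := by
  classical
  set V : Matrix (Fin e) (Fin e) F := Matrix.of fun r k => v k ^ (r : ℕ) with hV
  have hdet : IsUnit V.det := by
    have hVt : V = (Matrix.vandermonde v).transpose := by
      ext r k
      simp [hV, Matrix.vandermonde]
    rw [hVt, Matrix.det_transpose, Matrix.det_vandermonde]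
    refine (Finset.prod_ne_zero_iff.mpr fun i _ =>
      Finset.prod_ne_zero_iff.mpr fun j hj => ?_).isUnit
    exact sub_ne_zero.mpr fun hEq => (Finset.mem_Ioi.mp hj).ne' (hv hEq)
  have hWV : V⁻¹ * V = 1 := Matrix.nonsing_inv_mul V hdet
  intro k
  have key : w k = ∑ r, V⁻¹ k r • ∑ j, V r j • w j := by
    have h1 : ∑ r, V⁻¹ k r • ∑ j, V r j • w j = ∑ j, ((V⁻¹ * V) k j) • w j := by
      simp only [Finset.smul_sum, smul_smul, Matrix.mul_apply, Finset.sum_smul]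
      exact Finset.sum_comm
    rw [h1, hWV]
    simp [Matrix.one_apply, ite_smul]
  rw [key]
  exact Submodule.sum_smul_mem K _ fun r _ => h r

lemma aux_flatten {F : Type*} [DecidableEq F] [Zero F] {m n : ℕ} (c : Fin m → Fin n → F) :
    hammingNorm (fun p : Fin m × Fin n => c p.1 p.2) = ∑ j, hammingNorm (c j) := by
  simp only [hammingNorm, Finset.card_filter, Fintype.sum_prod_type]


/-- lower bound on the weight of nonzero EII codewords.

Same EII context, with `d j` the minimum distance of `C j` for `0 ≤ j ≤ t-1`.
Every nonzero codeword of the EII code has Hamming weight (as a vector of length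
`m·n`) at least `min { d j · (ŝ (j+1) + 1) : 0 ≤ j ≤ t-1 }`. -/
theorem stmt_6
    {F : Type*} [Field F] [Fintype F] [DecidableEq F]
    (n t : ℕ) (hn : 1 ≤ n) (ht : 1 ≤ t)
    (C : ℕ → Submodule F (Fin n → F))
    (hCt : C t = ⊥)
    (hnest : ∀ i, i < t → C (i + 1) < C i)
    (s : ℕ → ℕ) (m : ℕ)
    (hm : m = ∑ i ∈ Finset.range (t + 1), s i) (hm1 : 1 ≤ m)
    (α : F) (hα : m ≤ orderOf α)
    (shat : ℕ → ℕ) (hshat : ∀ i, shat i = ∑ j ∈ Finset.Icc i t, s j)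
    (d : ℕ → ℕ)
    (hd : ∀ j, j < t →
      IsLeast {w : ℕ | ∃ x ∈ C j, x ≠ 0 ∧ hammingNorm x = w} (d j)) :
    ∀ c : Fin m → Fin n → F,
      ((∀ j, c j ∈ C 0) ∧ ∀ i, 1 ≤ i → i ≤ t → ∀ r, r < shat i →
          (∑ j : Fin m, α ^ (r * (j : ℕ)) • c j) ∈ C i) →
      c ≠ 0 →
      (Finset.range t).inf'
          (Finset.nonempty_range_iff.mpr (Nat.one_le_iff_ne_zero.mp ht))
          (fun j => d j * (shat (j + 1) + 1))
        ≤ hammingNorm (fun p : Fin m × Fin n => c p.1 p.2) := by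
  classical
  rintro c ⟨hc1, hc2⟩ hc0
  set S : Finset (Fin m) := Finset.univ.filter (fun j => c j ≠ 0) with hS
  have hSne : S.Nonempty := by
    by_contra h
    apply hc0
    funext j
    by_contra hj
    exact h ⟨j, Finset.mem_filter.mpr ⟨Finset.mem_univ _, hj⟩⟩
  set e := S.card with he
  have he1 : 1 ≤ e := Finset.card_pos.mpr hSne
  have hem : e ≤ m := le_trans (Finset.card_le_univ S) (by simp)
  have hshat0 : shat 0 = m := by
    rw [hshat 0, hm]
    congr 1
    rw [Finset.range_eq_Ico, Finset.Ico_add_one_right_eq_Icc]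
  set P : ℕ → Prop := fun i => e ≤ shat i with hP
  have hP0 : P 0 := by
    show e ≤ shat 0
    rw [hshat0]; exact hem
  set i0 := Nat.findGreatest P t with hi0
  have hi0le : i0 ≤ t := Nat.findGreatest_le t
  have hPi0 : P i0 := Nat.findGreatest_spec (Nat.zero_le t) hP0
  have hlt : shat (i0 + 1) < e := by
    rcases lt_or_ge i0 t with h | h
    · have hnot : ¬ P (i0 + 1) :=
        Nat.findGreatest_is_greatest (Nat.lt_succ_self _) (Nat.succ_le_of_lt h)
      exact Nat.lt_of_not_le hnot
    · have hit : i0 = t := le_antisymm hi0le h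
      have : shat (t + 1) = 0 := by
        rw [hshat, Finset.Icc_eq_empty (by omega), Finset.sum_empty]
      rw [hit, this]
      exact he1
  -- all nonzero blocks lie in C i0
  have hblocks : ∀ j ∈ S, c j ∈ C i0 := by
    rcases Nat.eq_zero_or_pos i0 with h0 | hpos
    · intro j _; rw [h0]; exact hc1 j
    · set σ := S.orderEmbOfFin he.symm with hσ
      have hv : Function.Injective (fun k : Fin e => α ^ ((σ k : Fin m) : ℕ)) := by
        intro k l hkl
        have hk : ((σ k : Fin m) : ℕ) < orderOf α := lt_of_lt_of_le (σ k).2 hα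
        have hl : ((σ l : Fin m) : ℕ) < orderOf α := lt_of_lt_of_le (σ l).2 hα
        exact σ.injective (Fin.ext (pow_injOn_Iio_orderOf hk hl hkl))
      have hmem : ∀ r : Fin e,
          (∑ k, (α ^ ((σ k : Fin m) : ℕ)) ^ (r : ℕ) • c (σ k)) ∈ C i0 := by
        intro r
        have hr : (r : ℕ) < shat i0 := lt_of_lt_of_le r.2 hPi0
        have h2 := hc2 i0 hpos hi0le r hr
        have hsum : (∑ j : Fin m, α ^ ((r : ℕ) * (j : ℕ)) • c j)
            = ∑ k, (α ^ ((σ k : Fin m) : ℕ)) ^ (r : ℕ) • c (σ k) := by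
          rw [← Finset.sum_subset S.subset_univ (fun j _ hj => by
            have : c j = 0 := by
              by_contra hne
              exact hj (Finset.mem_filter.mpr ⟨Finset.mem_univ _, hne⟩)
            rw [this, smul_zero])]
          refine (Finset.sum_bij (fun k _ => σ k) (fun k _ => S.orderEmbOfFin_mem he.symm k)
            (fun k _ l _ hkl => σ.injective hkl) ?_ ?_).symm
          · intro j hj
            have : j ∈ Set.range σ := by
              rw [Finset.range_orderEmbOfFin]
              exact hj
            obtain ⟨k, hk⟩ := this
            exact ⟨k, Finset.mem_univ _, hk⟩
          · intro k _
            rw [← pow_mul, mul_comm]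
        rw [hsum] at h2
        exact h2
      have hall := aux_vandermonde _ hv (fun k => c (σ k)) (C i0) hmem
      intro j hj
      have : j ∈ Set.range σ := by
        rw [Finset.range_orderEmbOfFin]; exact hj
      obtain ⟨k, hk⟩ := this
      rw [← hk]
      exact hall k
  have hi0lt : i0 < t := by
    rcases lt_or_eq_of_le hi0le with h | h
    · exact h
    · exfalso
      obtain ⟨j, hj⟩ := hSne
      have hb := hblocks j hj
      rw [h, hCt, Submodule.mem_bot] at hb
      exact (Finset.mem_filter.mp hj).2 hb
  rw [aux_flatten]
  have h1 : ∀ j ∈ S, d i0 ≤ hammingNorm (c j) := fun j hj =>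
    (hd i0 hi0lt).2 ⟨c j, hblocks j hj, (Finset.mem_filter.mp hj).2, rfl⟩
  have h2 : e * d i0 ≤ ∑ j ∈ S, hammingNorm (c j) := by
    simpa [mul_comm] using Finset.card_nsmul_le_sum S _ _ h1
  have h3 : ∑ j ∈ S, hammingNorm (c j) ≤ ∑ j : Fin m, hammingNorm (c j) :=
    Finset.sum_le_sum_of_subset S.subset_univ
  have h4 : (Finset.range t).inf'
        (Finset.nonempty_range_iff.mpr (Nat.one_le_iff_ne_zero.mp ht))
        (fun j => d j * (shat (j + 1) + 1)) ≤ d i0 * (shat (i0 + 1) + 1) :=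
    Finset.inf'_le _ (Finset.mem_range.mpr hi0lt)
  calc (Finset.range t).inf' _ (fun j => d j * (shat (j + 1) + 1))
      ≤ d i0 * (shat (i0 + 1) + 1) := h4
    _ ≤ d i0 * e := Nat.mul_le_mul_left _ hlt
    _ = e * d i0 := mul_comm _ _
    _ ≤ ∑ j ∈ S, hammingNorm (c j) := h2
    _ ≤ ∑ j : Fin m, hammingNorm (c j) := h3
end

section
/- Assume s_0 ≥ 1 and that for every 0 ≤ j ≤ t−1 the code C_j is an MDS code with dim_F(C_j) = n − u_j and minimum distance u_j + 1. Then the minimum distance of the EII code C equals min{ (u_j+1)·(ŝ_{j+1}+1) : 0 ≤ j ≤ t−1 }. -/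
open Finset in
lemma aux_pow_inj {F : Type*} [Field F] {m : ℕ} {α : F} (hm1 : 1 ≤ m) (hα : m ≤ orderOf α) :
    ∀ a b : ℕ, a < m → b < m → α ^ a = α ^ b → a = b := by
  have hα0 : α ≠ 0 := by
    rintro rfl
    have h0 : IsOfFinOrder (0 : F) := by rw [← orderOf_pos_iff]; omega
    exact not_isUnit_zero h0.isUnit
  have key : ∀ a b : ℕ, a ≤ b → b < m → α ^ a = α ^ b → a = b := by
    intro a b hab hbm h
    have h1 : α ^ a * α ^ (b - a) = α ^ a * 1 := by
      rw [mul_one, ← pow_add, h]; congr 1; omega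
    have h2 : α ^ (b - a) = 1 := mul_left_cancel₀ (pow_ne_zero _ hα0) h1
    have h3 := orderOf_dvd_of_pow_eq_one h2
    rcases Nat.eq_zero_or_pos (b - a) with h4 | h4
    · omega
    · have := Nat.le_of_dvd h4 h3; omega
  intro a b ha hb h
  rcases le_total a b with hab | hab
  · exact key a b hab hb h
  · exact (key b a hab ha h.symm).symm

lemma aux_key {F : Type*} [Field F] {n m N : ℕ} {α : F}
    (hinj : ∀ a b : ℕ, a < m → b < m → α ^ a = α ^ b → a = b)
    (c : Fin m → Fin n → F) (ι : Fin N → Fin m) (hι : Function.Injective ι)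
    (hsupp : ∀ j, (∀ a, ι a ≠ j) → c j = 0)
    (W : Submodule F (Fin n → F))
    (hd : ∀ r : Fin N, (∑ j : Fin m, α ^ ((r : ℕ) * (j : ℕ)) • c j) ∈ W) :
    ∀ j, c j ∈ W := by
  classical
  set v : Fin N → F := fun a => α ^ ((ι a : ℕ)) with hv
  have hvinj : Function.Injective v := by
    intro a b hab
    exact hι (Fin.ext (hinj _ _ (ι a).2 (ι b).2 hab))
  set V : Matrix (Fin N) (Fin N) F := (Matrix.vandermonde v).transpose with hV
  have hdet : IsUnit V.det := by
    rw [hV, Matrix.det_transpose]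
    exact (Matrix.det_vandermonde_ne_zero_iff.mpr hvinj).isUnit
  set D : Fin N → Fin n → F := fun r => ∑ j : Fin m, α ^ ((r : ℕ) * (j : ℕ)) • c j with hD
  have hsum : ∀ (f : Fin m → F), (∀ j, (∀ a, ι a ≠ j) → f j = 0) →
      ∑ j : Fin m, f j = ∑ a : Fin N, f (ι a) := by
    intro f hf
    have hmap := Finset.sum_map Finset.univ ⟨ι, hι⟩ f
    simp only [Function.Embedding.coeFn_mk] at hmap
    rw [← hmap]
    apply (Finset.sum_subset (Finset.subset_univ _) _).symm
    intro j _ hj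
    apply hf
    intro a haj
    apply hj
    simp only [Finset.mem_map, Finset.mem_univ, Function.Embedding.coeFn_mk]
    exact ⟨a, trivial, haj⟩
  have hmulvec : ∀ k : Fin n, V.mulVec (fun a => c (ι a) k) = fun r => D r k := by
    intro k
    funext r
    have e1 : D r k = ∑ j : Fin m, α ^ ((r : ℕ) * (j : ℕ)) * c j k := by
      rw [hD]; simp [Finset.sum_apply]
    rw [e1, hsum (fun j => α ^ ((r : ℕ) * (j : ℕ)) * c j k)
      (fun j hj => by simp [hsupp j hj])]
    simp only [Matrix.mulVec, dotProduct, hV, Matrix.transpose_apply,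
      Matrix.vandermonde, Matrix.of_apply]
    refine Finset.sum_congr rfl fun a _ => ?_
    rw [hv, ← pow_mul, Nat.mul_comm]
  have hrepr : ∀ k : Fin n, (fun a => c (ι a) k) = (V⁻¹).mulVec (fun r => D r k) := by
    intro k
    rw [← hmulvec k, Matrix.mulVec_mulVec, Matrix.nonsing_inv_mul V hdet, Matrix.one_mulVec]
  intro j
  by_cases hj : ∀ a, ι a ≠ j
  · rw [hsupp j hj]; exact W.zero_mem
  · push_neg at hj
    obtain ⟨a, ha⟩ := hj
    have : c j = ∑ r : Fin N, (V⁻¹ a r) • D r := by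
      funext k
      have := congrFun (hrepr k) a
      rw [ha] at this
      rw [this]
      simp [Matrix.mulVec, dotProduct, Finset.sum_apply]
    rw [this]
    exact Submodule.sum_mem _ fun r _ => Submodule.smul_mem _ _ (hd r)

lemma aux_split {F : Type*} [Zero F] [DecidableEq F] {m n : ℕ} (c : Fin m → Fin n → F) :
    hammingNorm (fun p : Fin m × Fin n => c p.1 p.2) = ∑ j : Fin m, hammingNorm (c j) := by
  classical
  simp only [hammingNorm]
  rw [Finset.card_eq_sum_card_fiberwise
    (f := fun p : Fin m × Fin n => p.1) (t := Finset.univ) (fun x _ => Finset.mem_univ _)]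
  refine Finset.sum_congr rfl fun j _ => ?_
  refine Finset.card_bij' (fun p _ => p.2) (fun k _ => (j, k)) ?_ ?_ ?_ ?_
  · intro p hp
    simp only [Finset.mem_filter, Finset.mem_univ, true_and] at hp ⊢
    rw [← hp.2]; exact hp.1
  · intro k hk
    simp only [Finset.mem_filter, Finset.mem_univ, true_and] at hk ⊢
    exact ⟨hk, trivial⟩
  · intro p hp
    simp only [Finset.mem_filter, Finset.mem_univ, true_and] at hp
    exact Prod.ext hp.2.symm rfl
  · intro k _
    rfl

lemma aux_LB {F : Type*} [Field F] [DecidableEq F]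
    {n t : ℕ} (ht : 1 ≤ t)
    {C : ℕ → Submodule F (Fin n → F)} (hCt : C t = ⊥)
    {m : ℕ} (hm1 : 1 ≤ m)
    {α : F} (hα : m ≤ orderOf α)
    {shat : ℕ → ℕ} {u : ℕ → ℕ}
    (hMDS : ∀ j, j < t → ∀ x ∈ C j, x ≠ 0 → u j + 1 ≤ hammingNorm x)
    (c : Fin m → Fin n → F)
    (h1 : ∀ j, c j ∈ C 0)
    (h2 : ∀ i, 1 ≤ i → i ≤ t → ∀ r, r < shat i →
        (∑ j : Fin m, α ^ (r * (j : ℕ)) • c j) ∈ C i)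
    (hc : c ≠ 0) :
    ∃ i < t, (u i + 1) * (shat (i + 1) + 1) ≤ ∑ j : Fin m, hammingNorm (c j) := by
  classical
  set T : Finset ℕ := (Finset.range t).filter (fun i => ∀ j, c j ∈ C i) with hT
  have h0T : 0 ∈ T := by
    simp only [hT, Finset.mem_filter, Finset.mem_range]
    exact ⟨ht, h1⟩
  set i₀ : ℕ := T.max' ⟨0, h0T⟩ with hi₀
  have hi₀mem : i₀ ∈ T := T.max'_mem _
  have hi₀t : i₀ < t := (Finset.mem_filter.mp hi₀mem).1 |> Finset.mem_range.mp
  have hi₀C : ∀ j, c j ∈ C i₀ := (Finset.mem_filter.mp hi₀mem).2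
  set J : Finset (Fin m) := Finset.univ.filter (fun j => c j ≠ 0) with hJ
  have hJne : J.Nonempty := by
    rcases Function.ne_iff.mp hc with ⟨j, hj⟩
    refine ⟨j, ?_⟩
    simp only [hJ, Finset.mem_filter, Finset.mem_univ, true_and]
    simpa using hj
  set N : ℕ := J.card with hN
  -- main claim : N ≥ shat (i₀+1) + 1
  have hNbig : shat (i₀ + 1) + 1 ≤ N := by
    by_contra hcon
    push_neg at hcon
    have hNle : N ≤ shat (i₀ + 1) := by omega
    -- every row is in C (i₀+1)
    have hstep : ∀ j, c j ∈ C (i₀ + 1) := by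
      set e := J.equivFin with he
      set ι : Fin N → Fin m := fun a => (e.symm a : Fin m) with hι
      have hιinj : Function.Injective ι := by
        intro a b hab
        have := Subtype.coe_injective (a₁ := e.symm a) (a₂ := e.symm b) hab
        exact e.symm.injective this
      have hsupp : ∀ j, (∀ a, ι a ≠ j) → c j = 0 := by
        intro j hj
        by_contra hne
        have hjJ : j ∈ J := by simp [hJ, hne]
        exact hj (e ⟨j, hjJ⟩) (by simp [hι, he])
      refine aux_key (aux_pow_inj hm1 hα) c ι hιinj hsupp (C (i₀ + 1)) ?_
      intro r
      exact h2 (i₀ + 1) (by omega) (by omega) (r : ℕ) (lt_of_lt_of_le r.2 hNle)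
    rcases Nat.lt_or_ge (i₀ + 1) t with hlt | hge
    · have : i₀ + 1 ∈ T := by
        simp only [hT, Finset.mem_filter, Finset.mem_range]
        exact ⟨hlt, hstep⟩
      have := Finset.le_max' T _ this
      omega
    · have hit : i₀ + 1 = t := by omega
      rcases hJne with ⟨j, hjJ⟩
      have : c j ∈ C t := hit ▸ hstep j
      rw [hCt] at this
      simp only [Submodule.mem_bot] at this
      have : c j ≠ 0 := (Finset.mem_filter.mp hjJ).2
      exact this ‹c j = 0›
  refine ⟨i₀, hi₀t, ?_⟩
  calc (u i₀ + 1) * (shat (i₀ + 1) + 1) ≤ (u i₀ + 1) * N := by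
        exact Nat.mul_le_mul_left _ hNbig
    _ = ∑ _j ∈ J, (u i₀ + 1) := by rw [Finset.sum_const, smul_eq_mul, mul_comm]
    _ ≤ ∑ j ∈ J, hammingNorm (c j) := by
        refine Finset.sum_le_sum fun j hj => ?_
        exact hMDS i₀ hi₀t (c j) (hi₀C j) ((Finset.mem_filter.mp hj).2)
    _ ≤ ∑ j : Fin m, hammingNorm (c j) := by
        exact Finset.sum_le_sum_of_subset (Finset.subset_univ J)

/-- minimum distance of an EII code built on MDS codes,
Corollary `immediate` of the paper.

Same EII context, with `s 0 ≥ 1`.  Each `C j` (`0 ≤ j ≤ t-1`) is an MDS code with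
`dim C j = n - u j` and minimum distance `u j + 1`.  Claim: the minimum distance of
the EII code equals `min { (u j + 1) · (ŝ (j+1) + 1) : 0 ≤ j ≤ t-1 }` (expressed via
`IsLeast` on the set of Hamming weights of nonzero codewords). -/
theorem stmt_7
    {F : Type*} [Field F] [Fintype F] [DecidableEq F]
    (n t : ℕ) (hn : 1 ≤ n) (ht : 1 ≤ t)
    (C : ℕ → Submodule F (Fin n → F))
    (hCt : C t = ⊥)
    (hnest : ∀ i, i < t → C (i + 1) < C i)
    (s : ℕ → ℕ) (m : ℕ)
    (hm : m = ∑ i ∈ Finset.range (t + 1), s i) (hm1 : 1 ≤ m)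
    (α : F) (hα : m ≤ orderOf α)
    (shat : ℕ → ℕ) (hshat : ∀ i, shat i = ∑ j ∈ Finset.Icc i t, s j)
    (hs0 : 1 ≤ s 0)
    (u : ℕ → ℕ)
    (hdim : ∀ j, j < t → Module.finrank F (C j) = n - u j)
    (hMDS : ∀ j, j < t →
      IsLeast {w : ℕ | ∃ x ∈ C j, x ≠ 0 ∧ hammingNorm x = w} (u j + 1)) :
    IsLeast {w : ℕ | ∃ c : Fin m → Fin n → F,
        ((∀ j, c j ∈ C 0) ∧ ∀ i, 1 ≤ i → i ≤ t → ∀ r, r < shat i →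
            (∑ j : Fin m, α ^ (r * (j : ℕ)) • c j) ∈ C i) ∧
        c ≠ 0 ∧ hammingNorm (fun p : Fin m × Fin n => c p.1 p.2) = w}
      ((Finset.range t).inf'
        (Finset.nonempty_range_iff.mpr (Nat.one_le_iff_ne_zero.mp ht))
        (fun j => (u j + 1) * (shat (j + 1) + 1))) := by
  classical
  set M : ℕ := (Finset.range t).inf'
      (Finset.nonempty_range_iff.mpr (Nat.one_le_iff_ne_zero.mp ht))
      (fun j => (u j + 1) * (shat (j + 1) + 1)) with hM
  -- basic facts about shat
  have hanti : ∀ i i', i ≤ i' → shat i' ≤ shat i := by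
    intro i i' h
    rw [hshat, hshat]
    exact Finset.sum_le_sum_of_subset (Finset.Icc_subset_Icc_left h)
  have hshat1 : s 0 + shat 1 = m := by
    rw [hshat, hm]
    have h01 : Finset.range (t + 1) = insert 0 (Finset.Icc 1 t) := by
      ext x
      simp only [Finset.mem_range, Finset.mem_insert, Finset.mem_Icc]
      omega
    rw [h01, Finset.sum_insert (by simp)]
  -- chain of codes
  have hchain : ∀ i i', i ≤ i' → i' ≤ t → C i' ≤ C i := by
    have hstep : ∀ d i, i + d ≤ t → C (i + d) ≤ C i := by
      intro d
      induction d with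
      | zero => intro i _; simp
      | succ d ih =>
        intro i h
        have h1 : C (i + (d + 1)) ≤ C (i + d) := by
          have := (hnest (i + d) (by omega)).le
          simpa [Nat.add_assoc] using this
        exact le_trans h1 (ih i (by omega))
    intro i i' h h'
    have := hstep (i' - i) i (by omega)
    rwa [Nat.add_sub_cancel' h] at this
  -- MDS lower bound in usable form
  have hMDS' : ∀ j, j < t → ∀ x ∈ C j, x ≠ 0 → u j + 1 ≤ hammingNorm x := by
    intro j hj x hx hxne
    exact (hMDS j hj).2 ⟨x, hx, hxne, rfl⟩
  -- the general lower bound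
  have hLB : ∀ c : Fin m → Fin n → F, (∀ j, c j ∈ C 0) →
      (∀ i, 1 ≤ i → i ≤ t → ∀ r, r < shat i →
        (∑ j : Fin m, α ^ (r * (j : ℕ)) • c j) ∈ C i) → c ≠ 0 →
      M ≤ hammingNorm (fun p : Fin m × Fin n => c p.1 p.2) := by
    intro c h1 h2 hc
    obtain ⟨i, hit, hle⟩ := aux_LB ht hCt hm1 hα hMDS' c h1 h2 hc
    rw [aux_split]
    refine le_trans ?_ hle
    exact Finset.inf'_le _ (Finset.mem_range.mpr hit)
  constructor
  · -- membership : construct a codeword of weight exactly M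
    obtain ⟨i₀, hi₀mem, hi₀eq⟩ := Finset.exists_mem_eq_inf'
      (Finset.nonempty_range_iff.mpr (Nat.one_le_iff_ne_zero.mp ht))
      (fun j => (u j + 1) * (shat (j + 1) + 1))
    have hi₀t : i₀ < t := Finset.mem_range.mp hi₀mem
    obtain ⟨x, hxC, hxne, hxnorm⟩ := (hMDS i₀ hi₀t).1
    set Q : ℕ := shat (i₀ + 1) with hQdef
    have hQm : Q < m := by
      have := hanti 1 (i₀ + 1) (by omega)
      omega
    set P : Polynomial F := ∏ r ∈ Finset.range Q, (Polynomial.X - Polynomial.C (α ^ r))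
      with hP
    have hPmonic : P.Monic := Polynomial.monic_prod_of_monic _ _
      (fun r _ => Polynomial.monic_X_sub_C _)
    have hPdeg : P.natDegree = Q := by
      rw [hP, Polynomial.natDegree_prod _ _ (fun r _ => Polynomial.X_sub_C_ne_zero _)]
      simp only [Polynomial.natDegree_X_sub_C, Finset.sum_const, smul_eq_mul, mul_one,
        Finset.card_range]
    set c : Fin m → Fin n → F := fun j => P.coeff (j : ℕ) • x with hc
    -- the transform sums
    have hsumeval : ∀ r : ℕ,
        (∑ j : Fin m, α ^ (r * (j : ℕ)) • c j) = P.eval (α ^ r) • x := by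
      intro r
      have : ∀ j : Fin m, α ^ (r * (j : ℕ)) • c j =
          (P.coeff (j : ℕ) * (α ^ r) ^ (j : ℕ)) • x := by
        intro j
        show α ^ (r * (j : ℕ)) • (P.coeff (j : ℕ) • x) = _
        rw [smul_smul]
        congr 1
        rw [← pow_mul]
        exact mul_comm _ _
      rw [Finset.sum_congr rfl (fun j _ => this j), ← Finset.sum_smul]
      congr 1
      rw [Polynomial.eval_eq_sum_range' (lt_of_le_of_lt hPdeg.le hQm) (α ^ r)]
      rw [← Fin.sum_univ_eq_sum_range (fun i => P.coeff i * (α ^ r) ^ i) m]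
    have h1 : ∀ j, c j ∈ C 0 :=
      fun j => Submodule.smul_mem _ _ (hchain 0 i₀ (by omega) (by omega) hxC)
    have h2 : ∀ i, 1 ≤ i → i ≤ t → ∀ r, r < shat i →
        (∑ j : Fin m, α ^ (r * (j : ℕ)) • c j) ∈ C i := by
      intro i hi1 hit r hr
      rw [hsumeval r]
      rcases Nat.lt_or_ge r Q with hrQ | hrQ
      · have : P.eval (α ^ r) = 0 := by
          rw [hP, Polynomial.eval_prod]
          refine Finset.prod_eq_zero (Finset.mem_range.mpr hrQ) ?_
          simp
        rw [this, zero_smul]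
        exact Submodule.zero_mem _
      · have hii₀ : i ≤ i₀ := by
          by_contra hcon
          push_neg at hcon
          have := hanti (i₀ + 1) i hcon
          omega
        exact Submodule.smul_mem _ _ (hchain i i₀ hii₀ (by omega) hxC)
    have hcQ : c ⟨Q, hQm⟩ = x := by
      have hcoef : P.coeff Q = 1 := by
        rw [← hPdeg]; exact hPmonic.coeff_natDegree
      show P.coeff Q • x = x
      rw [hcoef, one_smul]
    have hcne : c ≠ 0 := by
      intro h0
      apply hxne
      rw [← hcQ, h0]
      rfl
    -- weight upper bound
    have hwle : hammingNorm (fun p : Fin m × Fin n => c p.1 p.2) ≤ M := by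
      rw [aux_split]
      have hrow : ∀ j : Fin m, hammingNorm (c j) ≤
          if P.coeff (j : ℕ) = 0 then 0 else u i₀ + 1 := by
        intro j
        by_cases h : P.coeff (j : ℕ) = 0
        · simp only [h, if_true]
          have : c j = 0 := by rw [hc]; simp only [h, zero_smul]
          rw [this]
          simp [hammingNorm]
        · simp only [h, if_false]
          rw [← hxnorm]
          apply le_of_eq
          simp only [hammingNorm, hc]
          congr 1
          ext k
          simp only [Finset.mem_filter, Finset.mem_univ, true_and, Pi.smul_apply,
            smul_eq_mul]
          constructor
          · intro hk hxk; exact hk (by rw [hxk, mul_zero])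
          · intro hk; exact fun hmul => hk (by
              rcases mul_eq_zero.mp hmul with h' | h'
              · exact absurd h' h
              · exact h')
      calc ∑ j : Fin m, hammingNorm (c j)
          ≤ ∑ j : Fin m, (if P.coeff (j : ℕ) = 0 then 0 else u i₀ + 1) :=
            Finset.sum_le_sum fun j _ => hrow j
        _ = (Finset.univ.filter (fun j : Fin m => ¬ P.coeff (j : ℕ) = 0)).card * (u i₀ + 1) := by
            rw [Finset.sum_ite, Finset.sum_const, Finset.sum_const]
            simp [mul_comm]
        _ ≤ (Q + 1) * (u i₀ + 1) := by
            apply Nat.mul_le_mul_right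
            have hsub : (Finset.univ.filter (fun j : Fin m => ¬ P.coeff (j : ℕ) = 0)).image
                (fun j : Fin m => (j : ℕ)) ⊆ Finset.range (Q + 1) := by
              intro a ha
              simp only [Finset.mem_image, Finset.mem_filter, Finset.mem_univ, true_and] at ha
              obtain ⟨j, hj, rfl⟩ := ha
              have := Polynomial.le_natDegree_of_ne_zero hj
              rw [hPdeg] at this
              simp only [Finset.mem_range]
              omega
            calc (Finset.univ.filter (fun j : Fin m => ¬ P.coeff (j : ℕ) = 0)).card
                = ((Finset.univ.filter (fun j : Fin m => ¬ P.coeff (j : ℕ) = 0)).image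
                    (fun j : Fin m => (j : ℕ))).card := by
                  rw [Finset.card_image_of_injective _ Fin.val_injective]
              _ ≤ (Finset.range (Q + 1)).card := Finset.card_le_card hsub
              _ = Q + 1 := Finset.card_range _
        _ = M := by rw [hM, hi₀eq]; ring
    have hwge := hLB c h1 h2 hcne
    exact ⟨c, ⟨h1, h2⟩, hcne, le_antisymm hwle hwge⟩
  · -- lower bound
    rintro w ⟨c, ⟨h1, h2⟩, hcne, hw⟩
    rw [← hw]
    exact hLB c h1 h2 hcne
end

section
/- Let C and C′ be the EII codes obtained from the same strictly nested codes {0} = C_t ⊂ C_{t−1} ⊂ ⋯ ⊂ C_0 and the same element α, with non-negative integer parameters (s_0,…,s_t) and (s′_0,…,s′_t) respectively, where s_0+⋯+s_t = s′_0+⋯+s′_t = m. Then C′ ⊆ C if and only if ŝ_i ≤ ŝ′_i for every 0 ≤ i ≤ t, where ŝ_i = s_i+⋯+s_t and ŝ′_i = s′_i+⋯+s′_t. -/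
/-- containment of EII codes sharing the same nested codes,
Lemma `lemma2` of the paper.

`C` and `C'` are the EII codes built on the same strictly nested codes
`⊥ = C t ⊂ ⋯ ⊂ C 0` and the same element `α`, with parameters `s` and `s'`
respectively, both summing to `m`.  Then `C' ⊆ C` iff `ŝ i ≤ ŝ' i` for all
`0 ≤ i ≤ t`. -/
theorem stmt_8
    {F : Type*} [Field F] [Fintype F] [DecidableEq F]
    (n t : ℕ) (hn : 1 ≤ n) (ht : 1 ≤ t)
    (C : ℕ → Submodule F (Fin n → F))
    (hCt : C t = ⊥)
    (hnest : ∀ i, i < t → C (i + 1) < C i)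
    (s s' : ℕ → ℕ) (m : ℕ)
    (hm : m = ∑ i ∈ Finset.range (t + 1), s i)
    (hm' : m = ∑ i ∈ Finset.range (t + 1), s' i)
    (hm1 : 1 ≤ m)
    (α : F) (hα : m ≤ orderOf α)
    (shat shat' : ℕ → ℕ)
    (hshat : ∀ i, shat i = ∑ j ∈ Finset.Icc i t, s j)
    (hshat' : ∀ i, shat' i = ∑ j ∈ Finset.Icc i t, s' j) :
    (∀ c : Fin m → Fin n → F,
      ((∀ j, c j ∈ C 0) ∧ ∀ i, 1 ≤ i → i ≤ t → ∀ r, r < shat' i →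
          (∑ j : Fin m, α ^ (r * (j : ℕ)) • c j) ∈ C i) →
      ((∀ j, c j ∈ C 0) ∧ ∀ i, 1 ≤ i → i ≤ t → ∀ r, r < shat i →
          (∑ j : Fin m, α ^ (r * (j : ℕ)) • c j) ∈ C i))
    ↔ ∀ i ≤ t, shat i ≤ shat' i := by
  -- basic facts about `shat`, `shat'`
  have hIcc : Finset.Icc 0 t = Finset.range (t + 1) := by
    rw [← Finset.Ico_add_one_right_eq_Icc, Nat.Ico_zero_eq_range]
  have hshat0 : shat 0 = m := by rw [hshat, hIcc, hm]
  have hshat'0 : shat' 0 = m := by rw [hshat', hIcc, hm']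
  have hanti : ∀ i j, i ≤ j → shat j ≤ shat i := by
    intro i j hij
    rw [hshat, hshat]
    apply Finset.sum_le_sum_of_subset
    intro x hx
    simp only [Finset.mem_Icc] at hx ⊢
    omega
  have hanti' : ∀ i j, i ≤ j → shat' j ≤ shat' i := by
    intro i j hij
    rw [hshat', hshat']
    apply Finset.sum_le_sum_of_subset
    intro x hx
    simp only [Finset.mem_Icc] at hx ⊢
    omega
  have hshat_le_m : ∀ i, shat i ≤ m := fun i => hshat0 ▸ hanti 0 i (Nat.zero_le i)
  have hshat'_le_m : ∀ i, shat' i ≤ m := fun i => hshat'0 ▸ hanti' 0 i (Nat.zero_le i)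
  -- monotonicity of the nested codes
  have hCmono : ∀ i j, i ≤ j → j ≤ t → C j ≤ C i := by
    intro i j hij hjt
    induction j with
    | zero => simpa [Nat.le_zero.mp hij] using le_refl (C 0)
    | succ k ih =>
      rcases Nat.lt_or_ge i (k + 1) with hlt | hge
      · exact le_trans (le_of_lt (hnest k (by omega))) (ih (by omega) (by omega))
      · have : i = k + 1 := by omega
        rw [this]
  constructor
  · -- hard direction: containment implies the inequalities
    intro hsub
    by_contra hcon
    push_neg at hcon
    obtain ⟨i₀, hi₀t, hlt⟩ := hcon
    have hi₀1 : 1 ≤ i₀ := by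
      by_contra h
      have : i₀ = 0 := by omega
      rw [this, hshat0, hshat'0] at hlt
      omega
    -- a vector in C (i₀ - 1) not in C i₀
    have hstep : C i₀ < C (i₀ - 1) := by
      have := hnest (i₀ - 1) (by omega)
      have h1 : i₀ - 1 + 1 = i₀ := by omega
      rwa [h1] at this
    obtain ⟨v, hv1, hv2⟩ := SetLike.exists_of_lt hstep
    -- α is a unit, and powers of α below m are injective
    have hα0 : α ≠ 0 := by
      intro h
      subst h
      have h2 : (0 : F) ^ orderOf (0 : F) = 1 := pow_orderOf_eq_one 0
      rw [zero_pow (by omega : orderOf (0 : F) ≠ 0)] at h2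
      exact zero_ne_one h2
    have hinj : Function.Injective (fun r : Fin m => α ^ (r : ℕ)) := by
      intro a b hab
      simp only at hab
      set u : Fˣ := (Ne.isUnit hα0).unit with hu
      have huα : (u : F) = α := (Ne.isUnit hα0).unit_spec
      have hou : m ≤ orderOf u := by rwa [← orderOf_units, huα]
      have hab' : u ^ (a : ℕ) = u ^ (b : ℕ) := by
        ext
        simpa [huα] using hab
      have := pow_injOn_Iio_orderOf (x := u)
        (by exact lt_of_lt_of_le a.isLt hou) (by exact lt_of_lt_of_le b.isLt hou) hab'
      exact Fin.ext this
    -- the Vandermonde matrix and its inverse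
    set M : Matrix (Fin m) (Fin m) F := Matrix.vandermonde (fun r : Fin m => α ^ (r : ℕ))
      with hMdef
    have hM : ∀ (r j : Fin m), M r j = α ^ ((r : ℕ) * (j : ℕ)) := by
      intro r j
      rw [hMdef, Matrix.vandermonde_apply, ← pow_mul]
    have hdet : IsUnit M.det := by
      rw [isUnit_iff_ne_zero]
      exact Matrix.det_vandermonde_ne_zero_iff.mpr hinj
    have hMB : M * M⁻¹ = 1 := Matrix.mul_nonsing_inv M hdet
    -- the target row index
    have hr₀m : shat' i₀ < m := lt_of_lt_of_le hlt (hshat_le_m i₀)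
    set r₀ : Fin m := ⟨shat' i₀, hr₀m⟩ with hr₀
    -- the codeword
    set c : Fin m → Fin n → F := fun j => M⁻¹ j r₀ • v with hc
    have key : ∀ (r : ℕ) (hr : r < m),
        (∑ j : Fin m, α ^ (r * (j : ℕ)) • c j)
          = (if (⟨r, hr⟩ : Fin m) = r₀ then (1 : F) else 0) • v := by
      intro r hr
      have h1 : (∑ j : Fin m, α ^ (r * (j : ℕ)) • c j)
          = (∑ j : Fin m, M ⟨r, hr⟩ j * M⁻¹ j r₀) • v := by
        rw [Finset.sum_smul]
        refine Finset.sum_congr rfl fun j _ => ?_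
        rw [hc, hM, smul_smul]
      rw [h1, ← Matrix.mul_apply, hMB, Matrix.one_apply]
    -- apply the containment hypothesis
    have hmem : (∀ j, c j ∈ C 0) ∧ ∀ i, 1 ≤ i → i ≤ t → ∀ r, r < shat' i →
        (∑ j : Fin m, α ^ (r * (j : ℕ)) • c j) ∈ C i := by
      constructor
      · intro j
        exact Submodule.smul_mem _ _ (hCmono 0 (i₀ - 1) (Nat.zero_le _) (by omega) hv1)
      · intro i hi1 hit r hr
        have hrm : r < m := lt_of_lt_of_le hr (hshat'_le_m i)
        rw [key r hrm]
        by_cases hcase : (⟨r, hrm⟩ : Fin m) = r₀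
        · have hreq : r = shat' i₀ := by
            have := congrArg (Fin.val) hcase
            simpa using this
          have hii₀ : i < i₀ := by
            by_contra h
            have := hanti' i₀ i (by omega)
            omega
          rw [if_pos hcase, one_smul]
          exact hCmono i (i₀ - 1) (by omega) (by omega) hv1
        · rw [if_neg hcase, zero_smul]
          exact Submodule.zero_mem _
    obtain ⟨-, h2⟩ := hsub c hmem
    have := h2 i₀ hi₀1 hi₀t (shat' i₀) hlt
    rw [key (shat' i₀) hr₀m, if_pos rfl, one_smul] at this
    exact hv2 this
  · -- easy direction
    intro hle c hc
    refine ⟨hc.1, fun i hi1 hit r hr => ?_⟩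
    exact hc.2 i hi1 hit r (lt_of_lt_of_le hr (hle i hit))
end

section
/- Suppose H_0 is a u_0 × n matrix over F whose right null space is C_0, and for 1 ≤ i ≤ t−1 suppose B_i is a (u_i − u_{i−1}) × n matrix over F such that C_i = { x ∈ F^n : H_{i−1}·x = 0 and B_i·x = 0 }, where H_i denotes the matrix obtained by stacking H_{i−1} on top of B_i. Then a tuple c = (c_0,…,c_{m−1}) ∈ (F^n)^m belongs to the EII code C if and only if the following three families of linear conditions hold: (a) H_0·c_j = 0 for every 0 ≤ j ≤ m−1; (b) B_i·(Σ_{j=0}^{m−1} α^{r·j}·c_j) = 0 for every 1 ≤ i ≤ t−1 and every 0 ≤ r ≤ ŝ_i − 1; and (c) Σ_{j=0}^{m−1} α^{r·j}·c_j = 0 for every 0 ≤ r ≤ ŝ_t − 1. Equivalently, identifying (F^n)^m with F^{m·n}, the code C is the right null space of the matrix obtained by stacking the blocks I_m ⊗ H_0, V_{ŝ_1} ⊗ B_1, …, V_{ŝ_{t−1}} ⊗ B_{t−1}, and V_{ŝ_t} ⊗ I_n, where ⊗ is the Kronecker product and V_s denotes the s × m matrix with (r,j)-entry α^{r·j}.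 -/
/-- parity-check description of an EII code, Theorem `l1` of the paper.

Same EII context, with `u i = n - dim C i`.  `H0` is a `u 0 × n` matrix whose right
null space is `C 0`, and for `1 ≤ i ≤ t-1` the matrix `B i` of size `(u i - u (i-1)) × n`
cuts out `C i` inside the null space of the stacked matrix `H (i-1)` (equivalently,
inside `C (i-1)`): `C i = { x : x ∈ C (i-1) ∧ B i ⬝ x = 0 }`.

Claim: `c` belongs to the EII code iff
(a) `H0 ⬝ c j = 0` for every row `j`;
(b) `B i ⬝ (∑ j, α ^ (r*j) • c j) = 0` for every `1 ≤ i ≤ t-1` and `r < ŝ i`; and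
(c) `∑ j, α ^ (r*j) • c j = 0` for every `r < ŝ t`.
(These are exactly the conditions that the stacked Kronecker-product matrix
`[I_m ⊗ H0; V_{ŝ 1} ⊗ B 1; …; V_{ŝ (t-1)} ⊗ B (t-1); V_{ŝ t} ⊗ I_n]` annihilates `c`.) -/
theorem stmt_9
    {F : Type*} [Field F] [Fintype F] [DecidableEq F]
    (n t : ℕ) (hn : 1 ≤ n) (ht : 1 ≤ t)
    (C : ℕ → Submodule F (Fin n → F))
    (hCt : C t = ⊥)
    (hnest : ∀ i, i < t → C (i + 1) < C i)
    (s : ℕ → ℕ) (m : ℕ)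
    (hm : m = ∑ i ∈ Finset.range (t + 1), s i) (hm1 : 1 ≤ m)
    (α : F) (hα : m ≤ orderOf α)
    (shat : ℕ → ℕ) (hshat : ∀ i, shat i = ∑ j ∈ Finset.Icc i t, s j)
    (u : ℕ → ℕ) (hu : ∀ i ≤ t, u i = n - Module.finrank F (C i))
    (H0 : Matrix (Fin (u 0)) (Fin n) F)
    (hH0 : ∀ x : Fin n → F, x ∈ C 0 ↔ H0.mulVec x = 0)
    (B : (i : ℕ) → Matrix (Fin (u i - u (i - 1))) (Fin n) F)
    (hB : ∀ i, 1 ≤ i → i ≤ t - 1 → ∀ x : Fin n → F,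
      x ∈ C i ↔ (x ∈ C (i - 1) ∧ (B i).mulVec x = 0)) :
    ∀ c : Fin m → Fin n → F,
      ((∀ j, c j ∈ C 0) ∧ ∀ i, 1 ≤ i → i ≤ t → ∀ r, r < shat i →
          (∑ j : Fin m, α ^ (r * (j : ℕ)) • c j) ∈ C i)
      ↔
      ((∀ j : Fin m, H0.mulVec (c j) = 0) ∧
       (∀ i, 1 ≤ i → i ≤ t - 1 → ∀ r, r < shat i →
          (B i).mulVec (∑ j : Fin m, α ^ (r * (j : ℕ)) • c j) = 0) ∧
       (∀ r, r < shat t → (∑ j : Fin m, α ^ (r * (j : ℕ)) • c j) = 0)) := by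

  intro c
  constructor
  · rintro ⟨h0, hC⟩
    refine ⟨fun j => (hH0 _).1 (h0 j), ?_, ?_⟩
    · intro i hi1 hit r hr
      have hit' : i ≤ t := le_trans hit (Nat.sub_le t 1)
      exact ((hB i hi1 hit _).1 (hC i hi1 hit' r hr)).2
    · intro r hr
      have := hC t ht le_rfl r hr
      rw [hCt, Submodule.mem_bot] at this
      exact this
  · rintro ⟨h0, hBc, hz⟩
    have hc0 : ∀ j, c j ∈ C 0 := fun j => (hH0 _).2 (h0 j)
    have hmono : ∀ i j, j ≤ i → shat i ≤ shat j := by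
      intro i j hji
      rw [hshat, hshat]
      apply Finset.sum_le_sum_of_subset
      intro x hx
      simp only [Finset.mem_Icc] at *
      exact ⟨le_trans hji hx.1, hx.2⟩
    have key : ∀ i, i ≤ t - 1 → ∀ r, r < shat i →
        (∑ j : Fin m, α ^ (r * (j : ℕ)) • c j) ∈ C i := by
      intro i
      induction i with
      | zero =>
        intro _ r _
        exact Submodule.sum_mem _ (fun j _ => Submodule.smul_mem _ _ (hc0 j))
      | succ k ih =>
        intro hk r hr
        have hk1 : 1 ≤ k + 1 := Nat.le_add_left 1 k
        rw [hB (k + 1) hk1 hk]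
        refine ⟨?_, hBc (k + 1) hk1 hk r hr⟩
        simp only [Nat.add_sub_cancel]
        exact ih (le_trans (Nat.le_succ k) hk) r
          (lt_of_lt_of_le hr (hmono (k + 1) k (Nat.le_succ k)))
    refine ⟨hc0, ?_⟩
    intro i hi1 hit r hr
    rcases Nat.lt_or_ge i t with h | h
    · exact key i (Nat.le_pred_of_lt h) r hr
    · have : i = t := le_antisymm hit h
      subst this
      rw [hCt, Submodule.mem_bot]
      exact hz r hr
end

section
/- Let 0 ≤ u_0 < u_1 < ⋯ < u_{t−1} < n be integers, let α ∈ F have multiplicative order at least max(m,n), for 0 ≤ i ≤ t−1 let C_i = { x ∈ F^n : Σ_{k=0}^{n−1} α^{e·k}·x_k = 0 for all 0 ≤ e ≤ u_i − 1 }, and let C_t = {0}. Then a tuple c = (c_0,…,c_{m−1}) ∈ (F^n)^m belongs to the EII code C built on these nested codes if and only if: (a) Σ_{k=0}^{n−1} α^{e·k}·c_j(k) = 0 for all 0 ≤ j ≤ m−1 and 0 ≤ e ≤ u_0 − 1; (b) Σ_{j=0}^{m−1} Σ_{k=0}^{n−1} α^{r·j + e·k}·c_j(k) = 0 for all 1 ≤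 i ≤ t−1, 0 ≤ r ≤ ŝ_i − 1, and u_{i−1} ≤ e ≤ u_i − 1; and (c) Σ_{j=0}^{m−1} α^{r·j}·c_j(k) = 0 for all 0 ≤ r ≤ ŝ_t − 1 and 0 ≤ k ≤ n−1. -/
/-- explicit parity checks of a 2-layer EII code built on
Vandermonde/Reed–Solomon nested codes, Corollary `ex0` of the paper.

Here `0 ≤ u 0 < u 1 < ⋯ < u (t-1) < n`, `α` has multiplicative order at least
`max m n`, `C i = { x : ∑ k, α^(e·k)·x k = 0 for all e < u i }` for `i < t`, and
`C t = ⊥`.  A tuple `c : Fin m → Fin n → F` belongs to the EII code built on these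
nested codes iff:
(a) `∑ k, α^(e·k)·c j k = 0` for all `j` and `e < u 0`;
(b) `∑ j ∑ k, α^(r·j + e·k)·c j k = 0` for all `1 ≤ i ≤ t-1`, `r < ŝ i`,
    `u (i-1) ≤ e < u i`; and
(c) `∑ j, α^(r·j)·c j k = 0` for all `r < ŝ t` and all `k`. -/
theorem stmt_10
    {F : Type*} [Field F] [Fintype F] [DecidableEq F]
    (n t : ℕ) (hn : 1 ≤ n) (ht : 1 ≤ t)
    (s : ℕ → ℕ) (m : ℕ)
    (hm : m = ∑ i ∈ Finset.range (t + 1), s i) (hm1 : 1 ≤ m)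
    (α : F) (hα : max m n ≤ orderOf α)
    (shat : ℕ → ℕ) (hshat : ∀ i, shat i = ∑ j ∈ Finset.Icc i t, s j)
    (u : ℕ → ℕ)
    (huinc : ∀ i, i + 1 < t → u i < u (i + 1))
    (hun : u (t - 1) < n)
    (C : ℕ → Submodule F (Fin n → F))
    (hCdef : ∀ i, i < t → ∀ x : Fin n → F,
      x ∈ C i ↔ ∀ e, e < u i → ∑ k : Fin n, α ^ (e * (k : ℕ)) * x k = 0)
    (hCt : C t = ⊥) :
    ∀ c : Fin m → Fin n → F,
      ((∀ j, c j ∈ C 0) ∧ ∀ i, 1 ≤ i → i ≤ t → ∀ r, r < shat i →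
          (∑ j : Fin m, α ^ (r * (j : ℕ)) • c j) ∈ C i)
      ↔
      ((∀ j : Fin m, ∀ e, e < u 0 →
          ∑ k : Fin n, α ^ (e * (k : ℕ)) * c j k = 0) ∧
       (∀ i, 1 ≤ i → i ≤ t - 1 → ∀ r, r < shat i → ∀ e, u (i - 1) ≤ e → e < u i →
          ∑ j : Fin m, ∑ k : Fin n, α ^ (r * (j : ℕ) + e * (k : ℕ)) * c j k = 0) ∧
       (∀ r, r < shat t → ∀ k : Fin n,
          ∑ j : Fin m, α ^ (r * (j : ℕ)) * c j k = 0)) := by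
  intro c
  have hpow : ∀ (r e : ℕ),
      (∑ k : Fin n, α ^ (e * (k : ℕ)) * (∑ j : Fin m, α ^ (r * (j : ℕ)) • c j) k)
        = ∑ j : Fin m, ∑ k : Fin n, α ^ (r * (j : ℕ) + e * (k : ℕ)) * c j k := by
    intro r e
    simp only [Finset.sum_apply, Pi.smul_apply, smul_eq_mul, Finset.mul_sum]
    rw [Finset.sum_comm]
    refine Finset.sum_congr rfl fun j _ => Finset.sum_congr rfl fun k _ => ?_
    rw [pow_add]; ring
  have hshat_mono : ∀ i i' : ℕ, i' ≤ i → shat i ≤ shat i' := by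
    intro i i' h
    rw [hshat, hshat]
    apply Finset.sum_le_sum_of_subset
    intro x hx
    simp only [Finset.mem_Icc] at *
    omega
  have hfind : ∀ i, ∀ e, i < t → e < u i →
      e < u 0 ∨ ∃ i', 1 ≤ i' ∧ i' ≤ i ∧ u (i' - 1) ≤ e ∧ e < u i' := by
    intro i
    induction i with
    | zero => intro e _ he; exact Or.inl he
    | succ p ih =>
      intro e hp he
      by_cases h : e < u p
      · rcases ih e (by omega) h with h1 | ⟨i', h2, h3, h4, h5⟩
        · exact Or.inl h1
        · exact Or.inr ⟨i', h2, by omega, h4, h5⟩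
      · exact Or.inr ⟨p + 1, by omega, le_rfl, by simpa using not_lt.mp h, he⟩
  constructor
  · rintro ⟨h0, hi⟩
    refine ⟨?_, ?_, ?_⟩
    · intro j e he
      exact (hCdef 0 (by omega) (c j)).mp (h0 j) e he
    · intro i hi1 hit r hr e _ he2
      have := (hCdef i (by omega) _).mp (hi i hi1 (by omega) r hr) e he2
      rw [hpow r e] at this
      exact this
    · intro r hr k
      have hmem := hi t ht le_rfl r hr
      rw [hCt, Submodule.mem_bot] at hmem
      have := congrFun hmem k
      simpa [Finset.sum_apply, smul_eq_mul] using this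
  · rintro ⟨ha, hb, hc⟩
    constructor
    · intro j
      exact (hCdef 0 (by omega) (c j)).mpr (ha j)
    · intro i hi1 hit r hr
      rcases eq_or_lt_of_le hit with heq | hlt
      · subst heq
        rw [hCt, Submodule.mem_bot]
        funext k
        have := hc r hr k
        simpa [Finset.sum_apply, smul_eq_mul] using this
      · rw [hCdef i hlt]
        intro e he
        rw [hpow r e]
        rcases hfind i e hlt he with h1 | ⟨i', h2, h3, h4, h5⟩
        · refine Finset.sum_eq_zero fun j _ => ?_
          have h0 := ha j e h1
          calc ∑ k : Fin n, α ^ (r * (j : ℕ) + e * (k : ℕ)) * c j k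
              = α ^ (r * (j : ℕ)) * ∑ k : Fin n, α ^ (e * (k : ℕ)) * c j k := by
                rw [Finset.mul_sum]
                refine Finset.sum_congr rfl fun k _ => ?_
                rw [pow_add]; ring
            _ = 0 := by rw [h0, mul_zero]
        · exact hb i' h2 (by omega) r
            (lt_of_lt_of_le hr (hshat_mono i i' h3)) e h4 h5
end

section
/- Let F be a field, let k ≥ 1 be an integer, and let α ∈ F be an element of finite multiplicative order strictly greater than k. Write ∏_{s=0}^{k−1}(X − α^s) = Σ_{i=0}^{k} v_i·X^i. Then v_i ≠ 0 for every 0 ≤ i ≤ k. -/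
open Polynomial Finset

-- Lemma A: scaling roots by c multiplies coeff i by c^(k-i)
lemma coeffA {F : Type*} [Field F] (c : F) (g : ℕ → F) (k : ℕ) :
    ∀ i, (∏ s ∈ range k, (X - C (c * g s))).coeff i
      = c ^ (k - i) * (∏ s ∈ range k, (X - C (g s))).coeff i := by
  induction k with
  | zero => intro i; rcases i with _ | i <;> simp
  | succ k ih =>
    intro i
    rw [prod_range_succ, prod_range_succ]
    rcases i with _ | i
    · rw [mul_coeff_zero, mul_coeff_zero, ih 0]
      simp [pow_succ]
      ring
    · rw [coeff_mul_X_sub_C, coeff_mul_X_sub_C, ih i, ih (i+1)]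
      rcases le_or_gt (i+1) k with h | h
      · have h1 : k + 1 - (i + 1) = k - i := by omega
        have h2 : k - i = (k - (i+1)) + 1 := by omega
        rw [h1, h2, pow_succ]
        ring
      · -- i + 1 > k : coeff (i+1) of degree-k product is zero
        have hz : (∏ s ∈ range k, (X - C (g s))).coeff (i+1) = 0 := by
          apply coeff_eq_zero_of_natDegree_lt
          calc (∏ s ∈ range k, (X - C (g s))).natDegree ≤ k := by
                apply le_trans (natDegree_prod_le _ _)
                apply le_trans (Finset.sum_le_card_nsmul _ _ 1 (fun s _ => natDegree_X_sub_C_le _))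
                simp
            _ < i + 1 := h
        rw [hz]
        rcases lt_or_eq_of_le (Nat.lt_succ_iff.mp h) with h' | h'
        · have hz' : (∏ s ∈ range k, (X - C (g s))).coeff i = 0 := by
            apply coeff_eq_zero_of_natDegree_lt
            calc (∏ s ∈ range k, (X - C (g s))).natDegree ≤ k := by
                  apply le_trans (natDegree_prod_le _ _)
                  apply le_trans (Finset.sum_le_card_nsmul _ _ 1 (fun s _ => natDegree_X_sub_C_le _))
                  simp
              _ < i := h'
          rw [hz']; ring
        · subst h'
          simp [Nat.succ_sub_one]

/-- nonvanishing of the coefficients of `∏_{s<k} (X - α^s)`.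

Let `F` be a field, `k ≥ 1`, and `α ∈ F` of finite multiplicative order strictly
greater than `k` (in Mathlib `orderOf α = 0` when the order is infinite, so
`k < orderOf α` expresses exactly this).  Writing
`∏_{s=0}^{k-1} (X - α^s) = ∑_{i=0}^{k} v_i X^i`, every coefficient `v_i`
(`0 ≤ i ≤ k`) is nonzero. -/
theorem stmt_12
    {F : Type*} [Field F]
    (k : ℕ) (hk : 1 ≤ k) (α : F) (hα : k < orderOf α) :
    ∀ i ≤ k,
      (∏ s ∈ Finset.range k, (Polynomial.X - Polynomial.C (α ^ s))).coeff i ≠ 0 := by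
  set P := ∏ s ∈ Finset.range k, (X - C (α ^ s)) with hP
  have hαne : ∀ m, 1 ≤ m → m ≤ k → α ^ m ≠ 1 := by
    intro m h1 h2 heq
    have := orderOf_le_of_pow_eq_one (by omega : 0 < m) heq
    omega
  -- key relation
  have key : ∀ i, 1 ≤ i → i ≤ k →
      (α ^ (k + 1 - i) - 1) * P.coeff (i - 1) = α ^ (k - i) * (1 - α ^ i) * P.coeff i := by
    intro i h1 h2
    -- two factorizations of ∏_{s<k+1}(X - α^s)
    have e1 : ∏ s ∈ range (k+1), (X - C (α ^ s)) = P * (X - C (α ^ k)) := by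
      rw [hP, prod_range_succ]
    have e2 : ∏ s ∈ range (k+1), (X - C (α ^ s))
        = (∏ s ∈ range k, (X - C (α * α ^ s))) * (X - C 1) := by
      rw [prod_range_succ']
      congr 1
      · apply prod_congr rfl; intro s _; rw [pow_succ']
      · simp
    obtain ⟨j, rfl⟩ : ∃ j, i = j + 1 := ⟨i - 1, by omega⟩
    have c1 := congrArg (fun p => Polynomial.coeff p (j+1)) (e1.symm.trans e2)
    rw [coeff_mul_X_sub_C, coeff_mul_X_sub_C, coeffA α (fun s => α ^ s) k j,
      coeffA α (fun s => α ^ s) k (j+1), ← hP] at c1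
    simp only [Nat.add_sub_cancel]
    have hkj : k - j = (k - (j+1)) + 1 := by omega
    rw [hkj, pow_succ] at c1
    have hk' : α ^ k = α ^ (k - (j+1)) * α ^ (j+1) := by
      rw [← pow_add]; congr 1; omega
    have hk1 : α ^ (k + 1 - (j+1)) = α ^ (k - (j+1)) * α := by
      rw [← pow_succ]; congr 1; omega
    rw [hk1]
    linear_combination -c1 - P.coeff (j+1) * hk'
  -- downward induction
  have hα0 : α ≠ 0 := by
    intro h; rw [h] at hα
    have : orderOf (0 : F) = 0 := by
      by_contra h0
      have := pow_orderOf_eq_one (0:F)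
      rw [zero_pow h0] at this
      exact one_ne_zero this.symm
    omega
  have hmon : P.Monic := monic_prod_of_monic _ _ (fun s _ => monic_X_sub_C _)
  have hdeg : P.natDegree = k := by
    rw [hP, natDegree_prod _ _ (fun s _ => X_sub_C_ne_zero _)]
    simp only [natDegree_X_sub_C]
    simp
  have top : P.coeff k = 1 := by
    rw [← hdeg]; exact hmon.coeff_natDegree
  intro i hi
  -- induction on k - i
  have : ∀ d, ∀ i, i ≤ k → k - i = d → P.coeff i ≠ 0 := by
    intro d
    induction d with
    | zero => intro i hi hd
              have : i = k := by omega
              rw [this, top]; exact one_ne_zero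
    | succ d ih =>
      intro i hi hd
      have hi1 : i + 1 ≤ k := by omega
      have hnext := ih (i+1) hi1 (by omega)
      have hrel := key (i+1) (by omega) hi1
      simp only [Nat.add_sub_cancel] at hrel
      intro hzero
      rw [hzero, mul_zero] at hrel
      have h1 : α ^ (k - (i+1)) ≠ 0 := pow_ne_zero _ hα0
      have h2 : 1 - α ^ (i+1) ≠ 0 := by
        intro h; apply hαne (i+1) (by omega) hi1
        linear_combination -h
      exact (mul_ne_zero (mul_ne_zero h1 h2) hnext) hrel.symm
  exact this (k - i) i hi rfl
end

section
/- Let 0 ≤ j ≤ t−1 with ŝ_{j+1} < m, let w ∈ C_j, and let v(X) = Σ_{s=0}^{ŝ_{j+1}} v_s·X^s be a polynomial over F of degree at most ŝ_{j+1} such that v(α^r) = 0 for every 0 ≤ r ≤ ŝ_{j+1} − 1. Then the tuple c = (c_0,…,c_{m−1}) defined by c_s = v_s·w for 0 ≤ s ≤ ŝ_{j+1} and c_s = 0 for ŝ_{j+1} < s ≤ m−1 is a codeword of the EII code C. -/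
/-- construction of an EII codeword from a row codeword and a
polynomial vanishing on `1, α, …, α^{ŝ_{j+1}-1}`.

Same EII context.  Let `0 ≤ j ≤ t-1` with `ŝ (j+1) < m`, let `w ∈ C j`, and let
`v = ∑_{s=0}^{ŝ (j+1)} v_s X^s` be a polynomial of degree at most `ŝ (j+1)` with
`v(α^r) = 0` for all `r < ŝ (j+1)`.  Then the tuple `c` with `c s = v_s • w` for
`s ≤ ŝ (j+1)` and `c s = 0` otherwise is a codeword of the EII code. -/
theorem stmt_13
    {F : Type*} [Field F] [Fintype F] [DecidableEq F]
    (n t : ℕ) (hn : 1 ≤ n) (ht : 1 ≤ t)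
    (C : ℕ → Submodule F (Fin n → F))
    (hCt : C t = ⊥)
    (hnest : ∀ i, i < t → C (i + 1) < C i)
    (s : ℕ → ℕ) (m : ℕ)
    (hm : m = ∑ i ∈ Finset.range (t + 1), s i) (hm1 : 1 ≤ m)
    (α : F) (hα : m ≤ orderOf α)
    (shat : ℕ → ℕ) (hshat : ∀ i, shat i = ∑ j ∈ Finset.Icc i t, s j)
    (j : ℕ) (hj : j < t) (hjm : shat (j + 1) < m)
    (w : Fin n → F) (hw : w ∈ C j)
    (v : Polynomial F) (hdeg : v.natDegree ≤ shat (j + 1))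
    (hroots : ∀ r, r < shat (j + 1) → v.eval (α ^ r) = 0) :
    ((∀ j' : Fin m,
        (if (j' : ℕ) ≤ shat (j + 1) then v.coeff (j' : ℕ) • w else 0) ∈ C 0) ∧
      ∀ i, 1 ≤ i → i ≤ t → ∀ r, r < shat i →
        (∑ j' : Fin m, α ^ (r * (j' : ℕ)) •
            (if (j' : ℕ) ≤ shat (j + 1) then v.coeff (j' : ℕ) • w else 0)) ∈ C i) := by
  -- monotonicity of the code chain
  have hmono : ∀ a b : ℕ, a ≤ b → b ≤ t → C b ≤ C a := by
    intro a b hab hbt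
    induction b with
    | zero =>
      have : a = 0 := Nat.le_zero.mp hab
      subst this; exact le_rfl
    | succ b ih =>
      rcases Nat.lt_or_ge a (b + 1) with h | h
      · exact le_trans (le_of_lt (hnest b (by omega))) (ih (by omega) (by omega))
      · have : a = b + 1 := by omega
        subst this; exact le_rfl
  have hdlt : v.natDegree < m := lt_of_le_of_lt hdeg hjm
  have key : ∀ r : ℕ, (∑ j' : Fin m, α ^ (r * (j' : ℕ)) •
      (if (j' : ℕ) ≤ shat (j + 1) then v.coeff (j' : ℕ) • w else 0))
      = v.eval (α ^ r) • w := by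
    intro r
    have hterm : ∀ j' : Fin m, α ^ (r * (j' : ℕ)) •
        (if (j' : ℕ) ≤ shat (j + 1) then v.coeff (j' : ℕ) • w else 0)
        = (v.coeff (j' : ℕ) * (α ^ r) ^ (j' : ℕ)) • w := by
      intro j'
      by_cases h : (j' : ℕ) ≤ shat (j + 1)
      · simp [h, smul_smul, pow_mul, mul_comm]
      · have hz : v.coeff (j' : ℕ) = 0 :=
          Polynomial.coeff_eq_zero_of_natDegree_lt (by omega)
        simp [h, hz]
    rw [Finset.sum_congr rfl (fun j' _ => hterm j'), ← Finset.sum_smul]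
    congr 1
    rw [Polynomial.eval_eq_sum_range' hdlt,
      ← Fin.sum_univ_eq_sum_range (fun i => v.coeff i * (α ^ r) ^ i) m]
  constructor
  · intro j'
    by_cases h : (j' : ℕ) ≤ shat (j + 1)
    · simp only [h, if_true]
      exact Submodule.smul_mem _ _ (hmono 0 j (Nat.zero_le _) (le_of_lt hj) hw)
    · simp only [h, if_false]
      exact (C 0).zero_mem
  · intro i h1 h2 r hr
    rw [key r]
    by_cases hrK : r < shat (j + 1)
    · rw [hroots r hrK, zero_smul]
      exact (C i).zero_mem
    · have hij : i ≤ j := by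
        by_contra hcon
        push_neg at hcon
        have hsub : shat i ≤ shat (j + 1) := by
          rw [hshat, hshat]
          exact Finset.sum_le_sum_of_subset (Finset.Icc_subset_Icc_left (by omega))
        omega
      exact Submodule.smul_mem _ _ (hmono i j hij (le_of_lt hj) hw)
end

section
/- Let c = (c_0,…,c_{m−1}) be a codeword of the EII code C and let 1 ≤ i ≤ t. If the number of indices j with c_j ≠ 0 is at most ŝ_i, then c_j ∈ C_i for every 0 ≤ j ≤ m−1. -/
/-- codewords with few nonzero rows have all rows in `C i`.

Same EII context.  If `c` is a codeword of the EII code, `1 ≤ i ≤ t`, and the number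
of indices `j` with `c j ≠ 0` is at most `ŝ i`, then every row `c j` belongs to `C i`. -/
theorem stmt_14
    {F : Type*} [Field F] [Fintype F] [DecidableEq F]
    (n t : ℕ) (hn : 1 ≤ n) (ht : 1 ≤ t)
    (C : ℕ → Submodule F (Fin n → F))
    (hCt : C t = ⊥)
    (hnest : ∀ i, i < t → C (i + 1) < C i)
    (s : ℕ → ℕ) (m : ℕ)
    (hm : m = ∑ i ∈ Finset.range (t + 1), s i) (hm1 : 1 ≤ m)
    (α : F) (hα : m ≤ orderOf α)
    (shat : ℕ → ℕ) (hshat : ∀ i, shat i = ∑ j ∈ Finset.Icc i t, s j)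
    (c : Fin m → Fin n → F)
    (hc : (∀ j, c j ∈ C 0) ∧ ∀ i, 1 ≤ i → i ≤ t → ∀ r, r < shat i →
        (∑ j : Fin m, α ^ (r * (j : ℕ)) • c j) ∈ C i)
    (i : ℕ) (hi1 : 1 ≤ i) (hit : i ≤ t)
    (hcard : (Finset.univ.filter fun j : Fin m => c j ≠ 0).card ≤ shat i) :
    ∀ j : Fin m, c j ∈ C i := by
  obtain ⟨hc0, hcs⟩ := hc
  set k := shat i with hk
  have hkm : k ≤ m := by
    rw [hk, hshat i, hm]
    apply Finset.sum_le_sum_of_subset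
    intro x hx
    simp only [Finset.mem_Icc, Finset.mem_range] at *
    omega
  obtain ⟨T, hTsub, hTcard⟩ := Finset.exists_superset_card_eq hcard (by simpa using hkm)
  -- enumeration of T
  set e : Fin k → Fin m := fun a => (T.orderIsoOfFin hTcard a : Fin m) with he
  have he_inj : Function.Injective e := fun a b h => by
    apply (T.orderIsoOfFin hTcard).injective
    exact Subtype.ext h
  have he_mem : ∀ a, e a ∈ T := fun a => (T.orderIsoOfFin hTcard a).2
  have he_surj : ∀ j ∈ T, ∃ a, e a = j := by
    intro j hj
    obtain ⟨a, ha⟩ := (T.orderIsoOfFin hTcard).surjective ⟨j, hj⟩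
    exact ⟨a, congrArg Subtype.val ha⟩
  have hzero : ∀ j : Fin m, j ∉ T → c j = 0 := by
    intro j hj
    by_contra h
    exact hj (hTsub (Finset.mem_filter.2 ⟨Finset.mem_univ _, h⟩))
  -- the Vandermonde matrix
  set x : Fin k → F := fun a => α ^ ((e a : Fin m) : ℕ) with hx
  have hx_inj : Function.Injective x := by
    intro a b hab
    apply he_inj
    have h1 : ((e a : Fin m) : ℕ) < orderOf α := lt_of_lt_of_le (e a).2 hα
    have h2 : ((e b : Fin m) : ℕ) < orderOf α := lt_of_lt_of_le (e b).2 hα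
    exact Fin.ext (pow_injOn_Iio_orderOf h1 h2 hab)
  set M : Matrix (Fin k) (Fin k) F := fun r a => x a ^ (r : ℕ) with hM
  have hdet : IsUnit M.det := by
    have hMT : M = Matrix.transpose (Matrix.vandermonde x) := by
      ext r a
      simp [hM, Matrix.transpose_apply, Matrix.vandermonde_apply]
    rw [hMT, Matrix.det_transpose, Matrix.det_vandermonde]
    apply IsUnit.mk0
    apply Finset.prod_ne_zero_iff.2
    intro a _
    apply Finset.prod_ne_zero_iff.2
    intro b hb
    rw [Finset.mem_Ioi] at hb
    exact sub_ne_zero_of_ne fun h => absurd (hx_inj h).symm (ne_of_lt hb)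
  -- the sums
  set S : Fin k → Fin n → F := fun r => ∑ j : Fin m, α ^ ((r : ℕ) * (j : ℕ)) • c j with hS
  have hSmem : ∀ r, S r ∈ C i := fun r => hcs i hi1 hit r r.2
  -- S r = ∑ a, M r a • c (e a)
  have hSsum : ∀ r, S r = ∑ a : Fin k, M r a • c (e a) := by
    intro r
    simp only [hS]
    rw [← Finset.sum_subset (Finset.subset_univ T)]
    · rw [← Finset.sum_attach T (fun j => α ^ ((r:ℕ) * (j:ℕ)) • c j)]
      exact (Fintype.sum_equiv (T.orderIsoOfFin hTcard).toEquiv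
        (fun a : Fin k => M r a • c (e a))
        (fun j : T => α ^ ((r:ℕ) * ((j : Fin m):ℕ)) • c (j : Fin m))
        (fun a => by simp only [hM, hx, he, ← pow_mul, Nat.mul_comm]; rfl)).symm
    · intro j _ hj
      rw [hzero j hj, smul_zero]
  -- invert
  have key : ∀ a : Fin k, c (e a) ∈ C i := by
    intro a
    have hinv := Matrix.nonsing_inv_mul M hdet
    have : c (e a) = ∑ r : Fin k, M⁻¹ a r • S r := by
      have : ∑ r : Fin k, M⁻¹ a r • S r
          = ∑ b : Fin k, (∑ r : Fin k, M⁻¹ a r * M r b) • c (e b) := by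
        simp only [hSsum, Finset.smul_sum, Finset.sum_smul, mul_smul]
        exact Finset.sum_comm
      rw [this]
      have hMM : ∀ b, (∑ r : Fin k, M⁻¹ a r * M r b) = if a = b then 1 else 0 := by
        intro b
        have := congrFun (congrFun hinv a) b
        simpa [Matrix.mul_apply, Matrix.one_apply] using this
      simp only [hMM]
      simp [Finset.sum_ite_eq, Finset.mem_univ]
    rw [this]
    exact Submodule.sum_mem _ fun r _ => Submodule.smul_mem _ _ (hSmem r)
  intro j
  by_cases hj : j ∈ T
  · obtain ⟨a, rfl⟩ := he_surj j hj
    exact key a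
  · rw [hzero j hj]
    exact Submodule.zero_mem _
end
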